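/- arXiv:1606.06089 — 6 statements merged into one kernel-verified Lean document; each statement's English description precedes it below -/
import Mathlib

section
/- (Hardy–Littlewood–Sobolev theorem for the fractional integral associated with ρ: weak type at p = 1.) Let 0 < ν < Q and define q by 1 − 1/q = ν/Q. Then there exists a constant C > 0 such that for every f ∈ L^1(ℝ^{d+k}) and every λ > 0, the function I_ν f(x,y) = ∫_{ℝ^{d+k}} ρ((x,y) − (x',y'))^{ν−Q} f(x',y') dx' dy' satisfies the weak-type estimate: the Lebesgue measure of the set {(x,y) ∈ ℝ^{d+k} : |I_ν f(x,y)| > λ} is at most (C ‖f‖_{L^1} / λ)^q. -/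
open MeasureTheory Real
open scoped RealInnerProductSpace ENNReal

/-- The anisotropic distance function `ρ(x,y) = (|x|^{2+2μ} + (1+μ)²|y|²)^{1/(2+2μ)}`. -/
noncomputable def grho (μ : ℝ) {d k : ℕ}
    (z : EuclideanSpace ℝ (Fin d) × EuclideanSpace ℝ (Fin k)) : ℝ :=
  (‖z.1‖ ^ (2 + 2 * μ) + (1 + μ) ^ 2 * ‖z.2‖ ^ 2) ^ (1 / (2 + 2 * μ))

/-- The Grushin gradient `∇_μ u = (∇_x u, |x|^μ ∇_y u)`. -/
noncomputable def gradMu (μ : ℝ) {d k : ℕ}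
    (u : EuclideanSpace ℝ (Fin d) × EuclideanSpace ℝ (Fin k) → ℝ)
    (z : EuclideanSpace ℝ (Fin d) × EuclideanSpace ℝ (Fin k)) :
    EuclideanSpace ℝ (Fin d) × EuclideanSpace ℝ (Fin k) :=
  (gradient (fun x => u (x, z.2)) z.1, (‖z.1‖ ^ μ) • gradient (fun y => u (z.1, y)) z.2)

/-- The Euclidean-type norm `((|v₁|² + |v₂|²))^{1/2}` of a pair. -/
noncomputable def pairNorm {d k : ℕ}
    (v : EuclideanSpace ℝ (Fin d) × EuclideanSpace ℝ (Fin k)) : ℝ :=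
  Real.sqrt (‖v.1‖ ^ 2 + ‖v.2‖ ^ 2)

/-- `|∇_μ u| = (|∇_x u|² + |x|^{2μ}|∇_y u|²)^{1/2}`. -/
noncomputable def gradMuNorm (μ : ℝ) {d k : ℕ}
    (u : EuclideanSpace ℝ (Fin d) × EuclideanSpace ℝ (Fin k) → ℝ)
    (z : EuclideanSpace ℝ (Fin d) × EuclideanSpace ℝ (Fin k)) : ℝ :=
  pairNorm (gradMu μ u z)

namespace HLSAux
open Metric Set

abbrev E (d k : ℕ) := EuclideanSpace ℝ (Fin d) × EuclideanSpace ℝ (Fin k)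

instance (d k : ℕ) : Measure.IsAddHaarMeasure (volume : Measure (E d k)) :=
  Measure.prod.instIsAddHaarMeasure volume volume

lemma grho_nonneg (μ : ℝ) {d k : ℕ} (z : E d k) : 0 ≤ grho μ z :=
  Real.rpow_nonneg (by positivity) _

lemma measurable_grho (μ : ℝ) {d k : ℕ} : Measurable (grho (d := d) (k := k) μ) := by
  unfold grho; fun_prop

lemma grho_le_subset {μ : ℝ} (hμ : 0 < μ) {d k : ℕ} {r : ℝ} (hr : 0 < r) :
    {z : E d k | grho μ z ≤ r}
      ⊆ (closedBall 0 r) ×ˢ (closedBall 0 (r ^ (1 + μ) / (1 + μ))) := by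
  have h1μ : (0:ℝ) < 1 + μ := by linarith
  have h2 : (0:ℝ) < 2 + 2 * μ := by linarith
  intro z hz
  simp only [Set.mem_setOf_eq, grho] at hz
  set b := ‖z.1‖ ^ (2 + 2 * μ) + (1 + μ) ^ 2 * ‖z.2‖ ^ 2 with hb
  have hb0 : 0 ≤ b := by positivity
  have hbase : b ≤ r ^ (2 + 2 * μ) := by
    have h := Real.rpow_le_rpow (Real.rpow_nonneg hb0 _) hz h2.le
    rwa [← Real.rpow_mul hb0, one_div_mul_cancel h2.ne', Real.rpow_one] at h
  have hx : ‖z.1‖ ≤ r := by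
    have h1 : ‖z.1‖ ^ (2 + 2*μ) ≤ r ^ (2 + 2*μ) := by nlinarith [sq_nonneg ‖z.2‖, sq_nonneg (1+μ), mul_nonneg (sq_nonneg (1+μ)) (sq_nonneg ‖z.2‖)]
    exact (Real.rpow_le_rpow_iff (norm_nonneg _) hr.le h2).1 h1
  have hy : ‖z.2‖ ≤ r ^ (1 + μ) / (1 + μ) := by
    have hsq : ((1 + μ) * ‖z.2‖) ^ 2 ≤ (r ^ (1 + μ)) ^ 2 := by
      have : (r ^ (1 + μ)) ^ 2 = r ^ (2 + 2*μ) := by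
        rw [← Real.rpow_natCast (r ^ (1+μ)) 2, ← Real.rpow_mul hr.le]
        norm_num; ring_nf
      rw [this, mul_pow]
      nlinarith [Real.rpow_nonneg (norm_nonneg z.1) (2 + 2*μ)]
    have := (pow_le_pow_iff_left₀ (by positivity) (Real.rpow_nonneg hr.le _) (by norm_num)).1 hsq
    rw [le_div_iff₀ h1μ]; linarith
  exact ⟨mem_closedBall_zero_iff.2 hx, mem_closedBall_zero_iff.2 hy⟩

noncomputable def ballC (μ : ℝ) (d k : ℕ) : ℝ :=
  (volume (Metric.ball (0 : EuclideanSpace ℝ (Fin d)) 1)).toReal *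
  (volume (Metric.ball (0 : EuclideanSpace ℝ (Fin k)) 1)).toReal * ((1 + μ)⁻¹) ^ k

lemma ballC_nonneg (μ : ℝ) (hμ : 0 < μ) (d k : ℕ) : 0 ≤ ballC μ d k := by
  have : (0:ℝ) ≤ (1+μ)⁻¹ := by positivity
  unfold ballC; positivity

lemma volume_grho_le {μ : ℝ} (hμ : 0 < μ) {d k : ℕ} (Q : ℝ) (hQ : Q = d + (1 + μ) * k)
    {r : ℝ} (hr : 0 < r) :
    volume {z : E d k | grho μ z ≤ r} ≤ ENNReal.ofReal (r ^ Q * ballC μ d k) := by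
  have h1μ : (0:ℝ) < 1 + μ := by linarith
  have hrk : (0:ℝ) ≤ r ^ (1 + μ) / (1 + μ) := by positivity
  calc volume {z : E d k | grho μ z ≤ r}
      ≤ volume ((Metric.closedBall (0 : EuclideanSpace ℝ (Fin d)) r) ×ˢ
          (Metric.closedBall (0 : EuclideanSpace ℝ (Fin k)) (r ^ (1 + μ) / (1 + μ)))) :=
        measure_mono (grho_le_subset hμ hr)
    _ = volume (Metric.closedBall (0 : EuclideanSpace ℝ (Fin d)) r) *
        volume (Metric.closedBall (0 : EuclideanSpace ℝ (Fin k)) (r ^ (1 + μ) / (1 + μ))) :=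
        by
        rw [show (volume : Measure (E d k)) = (volume : Measure (EuclideanSpace ℝ (Fin d))).prod volume from rfl]
        exact Measure.prod_prod _ _
    _ ≤ ENNReal.ofReal (r ^ Q * ballC μ d k) := by
        rw [Measure.addHaar_closedBall _ _ hr.le, Measure.addHaar_closedBall _ _ hrk,
          finrank_euclideanSpace_fin, finrank_euclideanSpace_fin]
        set Bd := volume (Metric.ball (0 : EuclideanSpace ℝ (Fin d)) 1) with hBd
        set Bk := volume (Metric.ball (0 : EuclideanSpace ℝ (Fin k)) 1) with hBk
        have hBd' : Bd = ENNReal.ofReal Bd.toReal := (ENNReal.ofReal_toReal measure_ball_lt_top.ne).symm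
        have hBk' : Bk = ENNReal.ofReal Bk.toReal := (ENNReal.ofReal_toReal measure_ball_lt_top.ne).symm
        rw [hBd', hBk', ← ENNReal.ofReal_mul (by positivity), ← ENNReal.ofReal_mul (by positivity),
          ← ENNReal.ofReal_mul (by positivity)]
        apply ENNReal.ofReal_le_ofReal
        have key : r ^ d * ((r ^ (1 + μ) / (1 + μ)) ^ k) = r ^ Q * ((1+μ)⁻¹) ^ k := by
          rw [div_pow, div_eq_mul_inv, ← inv_pow, ← Real.rpow_natCast r d,
            ← Real.rpow_natCast (r ^ (1 + μ)) k, ← Real.rpow_mul hr.le,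
            ← mul_assoc, ← Real.rpow_add hr, hQ]
        calc r ^ d * Bd.toReal * ((r ^ (1 + μ) / (1 + μ)) ^ k * Bk.toReal)
            = (r ^ d * ((r ^ (1 + μ) / (1 + μ)) ^ k)) * (Bd.toReal * Bk.toReal) := by ring
          _ = r ^ Q * ballC μ d k := by rw [key]; unfold ballC; ring
          _ ≤ r ^ Q * ballC μ d k := le_refl _
noncomputable def kerC (μ : ℝ) (d k : ℕ) (ν Q : ℝ) : ℝ :=
  2 ^ (Q - ν) * (1 - (2⁻¹ : ℝ) ^ ν)⁻¹ * ballC μ d k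

lemma shell_calc {R hv ν Q : ℝ} (hR : 0 < R) (hh0 : 0 < hv) (j : ℕ) :
    (R * hv ^ (j + 1)) ^ (ν - Q) * ((R * hv ^ j) ^ Q) =
      R ^ ν * hv ^ (ν - Q) * (hv ^ ν) ^ j := by
  have e1 : (R * hv ^ (j + 1)) ^ (ν - Q) = R ^ (ν - Q) * hv ^ (((j:ℝ) + 1) * (ν - Q)) := by
    rw [Real.mul_rpow hR.le (by positivity), ← Real.rpow_natCast hv (j + 1),
      ← Real.rpow_mul hh0.le]
    push_cast; ring_nf
  have e2 : (R * hv ^ j) ^ Q = R ^ Q * hv ^ ((j:ℝ) * Q) := by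
    rw [Real.mul_rpow hR.le (by positivity), ← Real.rpow_natCast hv j,
      ← Real.rpow_mul hh0.le]
  have e3 : (hv ^ ν) ^ j = hv ^ (ν * (j:ℝ)) := by
    rw [← Real.rpow_natCast (hv ^ ν) j, ← Real.rpow_mul hh0.le]
  calc (R * hv ^ (j + 1)) ^ (ν - Q) * ((R * hv ^ j) ^ Q)
      = (R ^ (ν - Q) * R ^ Q) * (hv ^ (((j:ℝ) + 1) * (ν - Q)) * hv ^ ((j:ℝ) * Q)) := by
        rw [e1, e2]; ring
    _ = R ^ ν * hv ^ (ν - Q + ν * (j:ℝ)) := by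
        rw [← Real.rpow_add hR, ← Real.rpow_add hh0]
        congr 1 <;> ring
    _ = R ^ ν * hv ^ (ν - Q) * (hv ^ ν) ^ j := by
        rw [e3, Real.rpow_add hh0]; ring

lemma lintegral_kernel {μ : ℝ} (hμ : 0 < μ) {d k : ℕ} (Q ν : ℝ)
    (hQ : Q = d + (1 + μ) * k) (hν0 : 0 < ν) (hνQ : ν < Q) {R : ℝ} (hR : 0 < R) :
    ∫⁻ z : E d k, Set.indicator {z : E d k | grho μ z ≤ R}
        (fun z => ENNReal.ofReal (grho μ z ^ (ν - Q))) z
      ≤ ENNReal.ofReal (R ^ ν * kerC μ d k ν Q) := by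
  have hh0 : (0:ℝ) < 2⁻¹ := by norm_num
  have hh1 : (2⁻¹:ℝ) < 1 := by norm_num
  set A : ℕ → Set (E d k) := fun j => {z : E d k | grho μ z ≤ R * 2⁻¹ ^ j} with hA
  have hAmeas : ∀ j, MeasurableSet (A j) := fun j =>
    measurableSet_le (measurable_grho μ) measurable_const
  set c : ℕ → ℝ≥0∞ := fun j => ENNReal.ofReal ((R * 2⁻¹ ^ (j+1)) ^ (ν - Q)) with hc
  have hpt : ∀ z : E d k, Set.indicator {z : E d k | grho μ z ≤ R}
      (fun z => ENNReal.ofReal (grho μ z ^ (ν - Q))) z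
      ≤ ∑' j : ℕ, Set.indicator (A j) (fun _ => c j) z := by
    intro z
    by_cases hz : grho μ z ≤ R
    · rw [Set.indicator_of_mem (show z ∈ {z : E d k | grho μ z ≤ R} from hz)]
      rcases eq_or_lt_of_le (grho_nonneg μ z) with h0 | h0
      · rw [← h0, Real.zero_rpow (by intro hc'; rw [sub_eq_zero] at hc'; linarith)]
        simp
      · obtain ⟨n, hn⟩ : ∃ n : ℕ, R * 2⁻¹ ^ n < grho μ z := by
          obtain ⟨n, hn⟩ := exists_pow_lt_of_lt_one (x := grho μ z / R) (by positivity) hh1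
          exact ⟨n, by rwa [← lt_div_iff₀' hR]⟩
        have hfind : ∃ n : ℕ, R * 2⁻¹ ^ n < grho μ z := ⟨n, hn⟩
        have hn₀spec : R * 2⁻¹ ^ (Nat.find hfind) < grho μ z := Nat.find_spec hfind
        have hn₀pos : Nat.find hfind ≠ 0 := by
          intro h0'
          rw [h0'] at hn₀spec; simp at hn₀spec; linarith
        obtain ⟨j, hj⟩ : ∃ j, Nat.find hfind = j + 1 :=
          ⟨Nat.find hfind - 1, (Nat.succ_pred_eq_of_pos (Nat.pos_of_ne_zero hn₀pos)).symm⟩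
        have hjA : z ∈ A j := by
          have := Nat.find_min hfind (m := j) (by omega)
          simpa [hA, Set.mem_setOf_eq] using not_lt.1 this
        have hK : ENNReal.ofReal (grho μ z ^ (ν - Q)) ≤ c j := by
          apply ENNReal.ofReal_le_ofReal
          apply Real.rpow_le_rpow_of_nonpos (by positivity)
          · rw [← hj]; exact hn₀spec.le
          · linarith
        calc ENNReal.ofReal (grho μ z ^ (ν - Q))
            ≤ Set.indicator (A j) (fun _ => c j) z := by
              rw [Set.indicator_of_mem hjA]; exact hK
          _ ≤ ∑' i : ℕ, Set.indicator (A i) (fun _ => c i) z := ENNReal.le_tsum j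
    · rw [Set.indicator_of_notMem (show z ∉ {z : E d k | grho μ z ≤ R} from hz)]
      exact zero_le
  calc ∫⁻ z : E d k, Set.indicator {z : E d k | grho μ z ≤ R}
          (fun z => ENNReal.ofReal (grho μ z ^ (ν - Q))) z
      ≤ ∫⁻ z : E d k, ∑' j : ℕ, Set.indicator (A j) (fun _ => c j) z := lintegral_mono hpt
    _ = ∑' j : ℕ, ∫⁻ z : E d k, Set.indicator (A j) (fun _ => c j) z :=
        lintegral_tsum (fun j => ((measurable_const).indicator (hAmeas j)).aemeasurable)
    _ = ∑' j : ℕ, c j * volume (A j) := by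
        congr 1; ext j; rw [lintegral_indicator_const (hAmeas j)]
    _ ≤ ∑' j : ℕ, ENNReal.ofReal (R ^ ν * 2⁻¹ ^ (ν - Q) * ballC μ d k) *
          ENNReal.ofReal ((2⁻¹:ℝ) ^ ν) ^ j := by
        apply ENNReal.tsum_le_tsum
        intro j
        have hvol : volume (A j) ≤ ENNReal.ofReal ((R * 2⁻¹ ^ j) ^ Q * ballC μ d k) :=
          volume_grho_le hμ Q hQ (by positivity)
        calc c j * volume (A j)
            ≤ ENNReal.ofReal ((R * 2⁻¹ ^ (j+1)) ^ (ν - Q)) *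
              ENNReal.ofReal ((R * 2⁻¹ ^ j) ^ Q * ballC μ d k) := mul_le_mul_right hvol _
          _ = ENNReal.ofReal ((R * 2⁻¹ ^ (j+1)) ^ (ν - Q) * ((R * 2⁻¹ ^ j) ^ Q * ballC μ d k)) := by
              rw [← ENNReal.ofReal_mul (Real.rpow_nonneg (by positivity) _)]
          _ = ENNReal.ofReal (R ^ ν * 2⁻¹ ^ (ν - Q) * ballC μ d k) *
              ENNReal.ofReal ((2⁻¹:ℝ) ^ ν) ^ j := by
              rw [← ENNReal.ofReal_pow (Real.rpow_nonneg hh0.le _),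
                ← ENNReal.ofReal_mul (mul_nonneg (by positivity) (ballC_nonneg μ hμ d k))]
              congr 1
              have := shell_calc (ν := ν) (Q := Q) hR hh0 j
              linear_combination (ballC μ d k) * this
    _ = ENNReal.ofReal (R ^ ν * 2⁻¹ ^ (ν - Q) * ballC μ d k) *
          (1 - ENNReal.ofReal ((2⁻¹:ℝ) ^ ν))⁻¹ := by
        rw [ENNReal.tsum_mul_left, ENNReal.tsum_geometric]
    _ ≤ ENNReal.ofReal (R ^ ν * kerC μ d k ν Q) := by
        have hhν1 : (2⁻¹:ℝ) ^ ν < 1 := Real.rpow_lt_one hh0.le hh1 hν0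
        have hhν0 : (0:ℝ) ≤ (2⁻¹:ℝ) ^ ν := Real.rpow_nonneg hh0.le _
        have hinv : (1 - ENNReal.ofReal ((2⁻¹:ℝ) ^ ν))⁻¹
            = ENNReal.ofReal (1 - (2⁻¹:ℝ) ^ ν)⁻¹ := by
          rw [← ENNReal.ofReal_one, ← ENNReal.ofReal_sub _ hhν0,
            ENNReal.ofReal_inv_of_pos (by linarith)]
        rw [hinv, ← ENNReal.ofReal_mul (mul_nonneg (by positivity) (ballC_nonneg μ hμ d k))]
        apply ENNReal.ofReal_le_ofReal
        have h2inv : (2⁻¹:ℝ) ^ (ν - Q) = 2 ^ (Q - ν) := by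
          rw [Real.inv_rpow (by norm_num), ← Real.rpow_neg (by norm_num), neg_sub]
        rw [h2inv]
        unfold kerC; ring_nf
        exact le_refl _
lemma kerC_nonneg (μ : ℝ) (hμ : 0 < μ) (d k : ℕ) {ν Q : ℝ} (hν0 : 0 < ν) :
    0 ≤ kerC μ d k ν Q := by
  have h1 : (2⁻¹:ℝ) ^ ν < 1 := Real.rpow_lt_one (by norm_num) (by norm_num) hν0
  have h2 : (0:ℝ) ≤ (1 - (2⁻¹:ℝ) ^ ν)⁻¹ := inv_nonneg.2 (by linarith)
  have h3 := ballC_nonneg μ hμ d k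
  exact mul_nonneg (mul_nonneg (Real.rpow_nonneg zero_le_two _) h2) h3

end HLSAux

open HLSAux in
/-- Hardy–Littlewood–Sobolev theorem for the fractional integral associated with `ρ`:
weak type estimate at `p = 1`. -/
theorem HLS_grushin_weak_type
    (d k : ℕ) (hd : 1 ≤ d) (hk : 1 ≤ k) (μ : ℝ) (hμ : 0 < μ)
    (Q : ℝ) (hQ : Q = d + (1 + μ) * k)
    (ν q : ℝ) (hν0 : 0 < ν) (hνQ : ν < Q) (hq : 1 - 1 / q = ν / Q) :
    ∃ C : ℝ, 0 < C ∧
      ∀ f : EuclideanSpace ℝ (Fin d) × EuclideanSpace ℝ (Fin k) → ℝ,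
        MemLp f 1 volume →
        ∀ t : ℝ, 0 < t →
          volume {z : EuclideanSpace ℝ (Fin d) × EuclideanSpace ℝ (Fin k) |
              t < |∫ w, grho μ (z - w) ^ (ν - Q) * f w|}
            ≤ ENNReal.ofReal ((C * (eLpNorm f 1 volume).toReal / t) ^ q) := by
  have hd1 : (1:ℝ) ≤ (d:ℕ) := by exact_mod_cast hd
  have hk1 : (1:ℝ) ≤ (k:ℕ) := by exact_mod_cast hk
  have hQ0 : (0:ℝ) < Q := by rw [hQ]; nlinarith
  set s : ℝ := Q - ν with hsdef
  have hs : 0 < s := by rw [hsdef]; linarith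
  have h1q : 1 / q = s / Q := by
    rw [hsdef, sub_div, div_self hQ0.ne']; linarith
  have hqne : q ≠ 0 := by
    intro h0; rw [h0] at h1q
    simp only [div_zero] at h1q
    have : s / Q > 0 := div_pos hs hQ0
    rw [← h1q] at this; exact lt_irrefl _ this
  have hqpos : 0 < q := by
    have h' : 0 < 1 / q := h1q ▸ div_pos hs hQ0
    by_contra hcon
    push_neg at hcon
    have : 1 / q ≤ 0 := div_nonpos_of_nonneg_of_nonpos zero_le_one hcon
    linarith
  have hqval : q = ν / s + 1 := by
    have hq' : q * (s / Q) = 1 := by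
      rw [← h1q]; field_simp
    have hqs : q * s = Q := by
      field_simp at hq'; linarith
    field_simp
    rw [hsdef] at hqs ⊢; linarith
  set cker : ℝ := kerC μ d k ν Q with hcker
  set b : ℝ := max cker 1 with hb
  have hb1 : (1:ℝ) ≤ b := le_max_right _ _
  have hb0 : (0:ℝ) < b := lt_of_lt_of_le one_pos hb1
  refine ⟨2 * b ^ (1 / q), by positivity, ?_⟩
  intro f hf t ht
  set f' : E d k → ℝ := hf.1.mk f with hf'
  have hf'meas : Measurable f' := hf.1.stronglyMeasurable_mk.measurable
  have hff' : f =ᵐ[volume] f' := hf.1.ae_eq_mk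
  have hsetEq : {z : E d k | t < |∫ w, grho μ (z - w) ^ (ν - Q) * f w|}
      = {z : E d k | t < |∫ w, grho μ (z - w) ^ (ν - Q) * f' w|} := by
    ext z
    simp only [Set.mem_setOf_eq]
    rw [integral_congr_ae (hff'.mono fun w hw => by rw [hw])]
  have heLp : eLpNorm f 1 volume = eLpNorm f' 1 volume := eLpNorm_congr_ae hff'
  rw [hsetEq, heLp]
  set g : E d k → ℝ≥0∞ := fun w => ENNReal.ofReal |f' w| with hg
  have mg : Measurable g := by
    have := hf'meas; unfold g; fun_prop
  set N : ℝ≥0∞ := ∫⁻ w, g w with hN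
  have hNeq : N = eLpNorm f' 1 volume := by
    rw [eLpNorm_one_eq_lintegral_enorm, hN]
    apply lintegral_congr
    intro w
    rw [hg, ← ofReal_norm_eq_enorm, Real.norm_eq_abs]
  have hNfin : N ≠ ∞ := by
    rw [hNeq, ← heLp]; exact hf.2.ne
  rw [← hNeq]
  set Nr : ℝ := N.toReal with hNr
  have hNofReal : N = ENNReal.ofReal Nr := (ENNReal.ofReal_toReal hNfin).symm
  rcases eq_or_ne N 0 with hN0 | hN0
  · have h0 : g =ᵐ[volume] 0 := (lintegral_eq_zero_iff mg).1 (by rw [← hN]; exact hN0)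
    have hf'0 : f' =ᵐ[volume] 0 := by
      filter_upwards [h0] with w hw
      simp only [hg, Pi.zero_apply] at hw ⊢
      have h1 : |f' w| ≤ 0 := ENNReal.ofReal_eq_zero.1 hw
      exact abs_eq_zero.1 (le_antisymm h1 (abs_nonneg _))
    have hempty : {z : E d k | t < |∫ w, grho μ (z - w) ^ (ν - Q) * f' w|} = ∅ := by
      ext z
      simp only [Set.mem_setOf_eq, Set.mem_empty_iff_false, iff_false, not_lt]
      have hz0 : (∫ w, grho μ (z - w) ^ (ν - Q) * f' w) = 0 := by
        apply integral_eq_zero_of_ae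
        filter_upwards [hf'0] with w hw
        rw [hw]; simp
      rw [hz0, abs_zero]; exact ht.le
    rw [hempty, measure_empty]; exact zero_le
  have hNrpos : 0 < Nr := ENNReal.toReal_pos hN0 hNfin
  set u : ℝ := 2 * Nr / t with hu
  have hupos : 0 < u := by positivity
  set R : ℝ := u ^ s⁻¹ with hR
  have hRpos : 0 < R := Real.rpow_pos_of_pos hupos _
  have hRs : R ^ (ν - Q) = u⁻¹ := by
    rw [hR, ← Real.rpow_mul hupos.le]
    have he : s⁻¹ * (ν - Q) = -1 := by
      rw [hsdef]; field_simp
      rw [div_eq_iff (by linarith)]; ring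
    rw [he, Real.rpow_neg_one]
  have hRν : R ^ ν = u ^ (ν / s) := by
    rw [hR, ← Real.rpow_mul hupos.le]
    congr 1; field_simp
  set Kfun : E d k → ℝ≥0∞ := fun z => ENNReal.ofReal (grho μ z ^ (ν - Q)) with hKfun
  have mK : Measurable Kfun := by
    have := measurable_grho (d := d) (k := k) μ; unfold Kfun; fun_prop
  set B : Set (E d k) := {z : E d k | grho μ z ≤ R} with hB
  have hBmeas : MeasurableSet B := measurableSet_le (measurable_grho μ) measurable_const
  set K1 : E d k → ℝ≥0∞ := B.indicator Kfun with hK1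
  set Kinf : E d k → ℝ≥0∞ := Bᶜ.indicator Kfun with hKinf
  have mK1 : Measurable K1 := mK.indicator hBmeas
  set I1 : E d k → ℝ≥0∞ := fun z => ∫⁻ w, K1 (z - w) * g w with hI1
  have mI1 : Measurable I1 :=
    Measurable.lintegral_prod_right
      ((mK1.comp (measurable_fst.sub measurable_snd)).mul (mg.comp measurable_snd))
  have hIinf : ∀ z : E d k, (∫⁻ w, Kinf (z - w) * g w) ≤ ENNReal.ofReal (t / 2) := by
    intro z
    have hKinfle : ∀ y : E d k, Kinf y ≤ ENNReal.ofReal (R ^ (ν - Q)) := by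
      intro y
      rw [hKinf]
      by_cases hy : y ∈ Bᶜ
      · rw [Set.indicator_of_mem hy]
        apply ENNReal.ofReal_le_ofReal
        exact Real.rpow_le_rpow_of_nonpos hRpos (le_of_lt (not_le.1 hy)) (by linarith)
      · rw [Set.indicator_of_notMem hy]; exact zero_le
    calc (∫⁻ w, Kinf (z - w) * g w)
        ≤ ∫⁻ w, ENNReal.ofReal (R ^ (ν - Q)) * g w :=
          lintegral_mono fun w => mul_le_mul_left (hKinfle _) _
      _ = ENNReal.ofReal (R ^ (ν - Q)) * N := lintegral_const_mul _ mg
      _ = ENNReal.ofReal (t / 2) := by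
          rw [hRs, hNofReal, ← ENNReal.ofReal_mul (by positivity)]
          congr 1
          rw [hu]
          field_simp
  have hsub : {z : E d k | t < |∫ w, grho μ (z - w) ^ (ν - Q) * f' w|}
      ⊆ {z : E d k | ENNReal.ofReal (t / 2) ≤ I1 z} := by
    intro z hz
    simp only [Set.mem_setOf_eq] at hz ⊢
    have hnorm : |∫ w, grho μ (z - w) ^ (ν - Q) * f' w|
        ≤ (∫⁻ w, Kfun (z - w) * g w).toReal := by
      have h1 := norm_integral_le_lintegral_norm (μ := volume)
        (f := fun w => grho μ (z - w) ^ (ν - Q) * f' w)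
      rw [Real.norm_eq_abs] at h1
      refine h1.trans (le_of_eq ?_)
      congr 1
      apply lintegral_congr
      intro w
      rw [Real.norm_eq_abs, abs_mul, abs_of_nonneg (Real.rpow_nonneg (grho_nonneg μ _) _),
        ENNReal.ofReal_mul (Real.rpow_nonneg (grho_nonneg μ _) _)]
    set F := ∫⁻ w, Kfun (z - w) * g w with hF
    have hmeasw : Measurable fun w => K1 (z - w) * g w :=
      (mK1.comp (measurable_const.sub measurable_id)).mul mg
    have hFsplit : F = I1 z + ∫⁻ w, Kinf (z - w) * g w := by
      rw [hF, hI1, ← lintegral_add_left hmeasw]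
      apply lintegral_congr
      intro w
      rw [← add_mul]
      congr 1
      exact (congrFun (Set.indicator_self_add_compl B Kfun) (z - w)).symm
    have hFne : F ≠ ∞ := by
      intro hbad
      rw [hbad] at hnorm
      simp only [ENNReal.toReal_top] at hnorm
      have := abs_nonneg (∫ w, grho μ (z - w) ^ (ν - Q) * f' w)
      linarith
    have htF : ENNReal.ofReal t < F := by
      rw [← ENNReal.ofReal_toReal hFne]
      exact (ENNReal.ofReal_lt_ofReal_iff (lt_of_le_of_lt ht.le (lt_of_lt_of_le hz hnorm))).2
        (lt_of_lt_of_le hz hnorm)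
    have hlt : ENNReal.ofReal (t / 2) < I1 z := by
      have hsum : ENNReal.ofReal t = ENNReal.ofReal (t / 2) + ENNReal.ofReal (t / 2) := by
        rw [← ENNReal.ofReal_add (by positivity) (by positivity)]
        congr 1; ring
      rw [hsum] at htF
      have h2 : F ≤ I1 z + ENNReal.ofReal (t / 2) := by
        rw [hFsplit]; exact add_le_add_right (hIinf z) _
      have h3 : ENNReal.ofReal (t / 2) + ENNReal.ofReal (t / 2) < I1 z + ENNReal.ofReal (t / 2) :=
        lt_of_lt_of_le htF h2
      exact (ENNReal.add_lt_add_iff_right ENNReal.ofReal_ne_top).1 h3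
    exact hlt.le
  have hker : (∫⁻ y, K1 y) ≤ ENNReal.ofReal (R ^ ν * cker) := by
    rw [hK1, hKfun, hB, hcker]
    exact lintegral_kernel hμ Q ν hQ hν0 hνQ hRpos
  calc volume {z : E d k | t < |∫ w, grho μ (z - w) ^ (ν - Q) * f' w|}
      ≤ volume {z : E d k | ENNReal.ofReal (t / 2) ≤ I1 z} := measure_mono hsub
    _ ≤ (∫⁻ z, I1 z) / ENNReal.ofReal (t / 2) :=
        meas_ge_le_lintegral_div mI1.aemeasurable
          (ENNReal.ofReal_pos.2 (by positivity)).ne' ENNReal.ofReal_ne_top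
    _ = ((∫⁻ y, K1 y) * N) / ENNReal.ofReal (t / 2) := by
        congr 1
        rw [hI1]
        rw [lintegral_lintegral_swap
          (((mK1.comp (measurable_fst.sub measurable_snd)).mul
            (mg.comp measurable_snd))).aemeasurable]
        calc ∫⁻ w, ∫⁻ z, K1 (z - w) * g w
            = ∫⁻ w, (∫⁻ z, K1 (z - w)) * g w := by
              apply lintegral_congr
              intro w
              rw [lintegral_mul_const _ (show Measurable fun z : E d k => K1 (z - w) from
                mK1.comp (measurable_sub_const w))]
          _ = ∫⁻ w, (∫⁻ y, K1 y) * g w := by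
              apply lintegral_congr
              intro w
              congr 1
              exact (measurePreserving_sub_right volume w).lintegral_comp mK1
          _ = (∫⁻ y, K1 y) * N := lintegral_const_mul _ mg
    _ ≤ (ENNReal.ofReal (R ^ ν * cker) * N) / ENNReal.ofReal (t / 2) := by
        gcongr
    _ ≤ ENNReal.ofReal ((2 * b ^ (1 / q) * Nr / t) ^ q) := by
        have hck0 : 0 ≤ cker := kerC_nonneg μ hμ d k hν0
        have hckb : R ^ ν * cker * Nr / (t / 2) ≤ (2 * b ^ (1 / q) * Nr / t) ^ q := by
          have e1 : R ^ ν * cker * Nr / (t / 2) = cker * (u ^ (ν / s) * u) := by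
            rw [hRν, hu]; field_simp [ht.ne']
          have e2 : u ^ (ν / s) * u = u ^ q := by
            rw [hqval, Real.rpow_add hupos, Real.rpow_one]
          have e3 : (2 * b ^ (1 / q) * Nr / t) ^ q = b * u ^ q := by
            have e4 : 2 * b ^ (1 / q) * Nr / t = b ^ (1 / q) * u := by rw [hu]; ring
            rw [e4, Real.mul_rpow (Real.rpow_nonneg hb0.le _) hupos.le,
              ← Real.rpow_mul hb0.le, one_div_mul_cancel hqne, Real.rpow_one]
          rw [e1, e2, e3]
          exact mul_le_mul_of_nonneg_right (le_max_left _ _) (Real.rpow_nonneg hupos.le _)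
        calc (ENNReal.ofReal (R ^ ν * cker) * N) / ENNReal.ofReal (t / 2)
            = ENNReal.ofReal (R ^ ν * cker * Nr / (t / 2)) := by
              rw [hNofReal, ← ENNReal.ofReal_mul (mul_nonneg (Real.rpow_nonneg hRpos.le _) hck0),
                ← ENNReal.ofReal_div_of_pos (by positivity)]
          _ ≤ _ := ENNReal.ofReal_le_ofReal hckb
end

section
/- (Elementary vector inequality, case 1 ≤ p ≤ 2, upper bound.) Let n ≥ 1 and let 1 ≤ p ≤ 2. There exists a constant C(p) > 0 such that for all ξ₁, ξ₂ ∈ ℝⁿ: |ξ₁ + ξ₂|^p − |ξ₁|^p − p |ξ₁|^{p−2} ⟨ξ₁, ξ₂⟩ ≤ C(p) |ξ₂|^p, where the term |ξ₁|^{p−2} ⟨ξ₁, ξ₂⟩ is interpreted as 0 when ξ₁ = 0. -/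
open scoped RealInnerProductSpace

/-- Tangent line bound for the concave function `x ↦ x ^ q` with `0 ≤ q ≤ 1`. -/
lemma rpow_tangent_line {q t s : ℝ} (hq0 : 0 ≤ q) (hq1 : q ≤ 1) (ht : 0 < t) (hs : 0 ≤ s) :
    s ^ q ≤ t ^ q + q * t ^ (q - 1) * (s - t) := by
  have hx : -1 ≤ s / t - 1 := by
    have : 0 ≤ s / t := div_nonneg hs ht.le
    linarith
  have h := rpow_one_add_le_one_add_mul_self hx hq0 hq1
  rw [add_sub_cancel] at h
  have htq : 0 < t ^ q := Real.rpow_pos_of_pos ht q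
  have h2 : (s / t) ^ q * t ^ q ≤ (1 + q * (s / t - 1)) * t ^ q :=
    mul_le_mul_of_nonneg_right h htq.le
  have h3 : (s / t) ^ q * t ^ q = s ^ q := by
    rw [Real.div_rpow hs ht.le, div_mul_cancel₀]
    exact htq.ne'
  have h4 : t ^ (q - 1) = t ^ q / t := by
    rw [Real.rpow_sub ht, Real.rpow_one]
  rw [h3] at h2
  calc s ^ q ≤ (1 + q * (s / t - 1)) * t ^ q := h2
    _ = t ^ q + q * (t ^ q / t) * (s - t) := by field_simp
    _ = t ^ q + q * t ^ (q - 1) * (s - t) := by rw [h4]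

/-- Elementary vector inequality, case `1 ≤ p ≤ 2`, upper bound. -/
theorem vector_inequality_p_le_two_upper
    (n : ℕ) (hn : 1 ≤ n) (p : ℝ) (hp1 : 1 ≤ p) (hp2 : p ≤ 2) :
    ∃ C : ℝ, 0 < C ∧
      ∀ ξ₁ ξ₂ : EuclideanSpace ℝ (Fin n),
        ‖ξ₁ + ξ₂‖ ^ p - ‖ξ₁‖ ^ p - p * ‖ξ₁‖ ^ (p - 2) * ⟪ξ₁, ξ₂⟫ ≤ C * ‖ξ₂‖ ^ p := by
  have hp0 : (0:ℝ) < p := by linarith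
  have h2p : (0:ℝ) ≤ (2:ℝ) ^ p := Real.rpow_nonneg (by norm_num) p
  refine ⟨(2:ℝ) ^ p + p + 1, by positivity, ?_⟩
  intro a b
  have hbp : (0:ℝ) ≤ ‖b‖ ^ p := Real.rpow_nonneg (norm_nonneg b) p
  by_cases ha : a = 0
  · subst ha
    simp only [inner_zero_left, norm_zero, mul_zero, zero_add,
      Real.zero_rpow hp0.ne', sub_zero]
    nlinarith
  · have hA : (0:ℝ) < ‖a‖ := norm_pos_iff.mpr ha
    by_cases hBA : ‖b‖ ≤ ‖a‖
    · -- concavity route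
      have hA2 : (0:ℝ) < ‖a‖ ^ (2:ℝ) := Real.rpow_pos_of_pos hA 2
      have hs : (0:ℝ) ≤ ‖a + b‖ ^ (2:ℝ) := Real.rpow_nonneg (norm_nonneg _) 2
      have key := rpow_tangent_line (q := p / 2) (t := ‖a‖ ^ (2:ℝ)) (s := ‖a + b‖ ^ (2:ℝ))
        (by linarith) (by linarith) hA2 hs
      have e1 : (‖a + b‖ ^ (2:ℝ)) ^ (p / 2) = ‖a + b‖ ^ p := by
        rw [← Real.rpow_mul (norm_nonneg _)]
        congr 1; ring
      have e2 : (‖a‖ ^ (2:ℝ)) ^ (p / 2) = ‖a‖ ^ p := by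
        rw [← Real.rpow_mul (norm_nonneg _)]
        congr 1; ring
      have e3 : (‖a‖ ^ (2:ℝ)) ^ (p / 2 - 1) = ‖a‖ ^ (p - 2) := by
        rw [← Real.rpow_mul (norm_nonneg _)]
        ring_nf
      have e4 : ‖a + b‖ ^ (2:ℝ) - ‖a‖ ^ (2:ℝ) = 2 * ⟪a, b⟫ + ‖b‖ ^ (2:ℝ) := by
        rw [Real.rpow_two, Real.rpow_two, Real.rpow_two, @norm_add_sq_real]
        ring
      rw [e1, e2, e3, e4] at key
      -- key : ‖a+b‖^p ≤ ‖a‖^p + (p/2) * ‖a‖^(p-2) * (2⟪a,b⟫ + ‖b‖^2)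
      have hb2 : ‖a‖ ^ (p - 2) * ‖b‖ ^ (2:ℝ) ≤ ‖b‖ ^ p := by
        by_cases hb : b = 0
        · subst hb
          simp only [norm_zero]
          rw [Real.zero_rpow (by norm_num : (2:ℝ) ≠ 0), Real.zero_rpow hp0.ne', mul_zero]
        · have hB : (0:ℝ) < ‖b‖ := norm_pos_iff.mpr hb
          have h1 : ‖a‖ ^ (p - 2) ≤ ‖b‖ ^ (p - 2) :=
            Real.rpow_le_rpow_of_nonpos hB hBA (by linarith)
          have h2 : ‖b‖ ^ (p - 2) * ‖b‖ ^ (2:ℝ) = ‖b‖ ^ p := by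
            rw [← Real.rpow_add hB]
            ring_nf
          calc ‖a‖ ^ (p - 2) * ‖b‖ ^ (2:ℝ) ≤ ‖b‖ ^ (p - 2) * ‖b‖ ^ (2:ℝ) :=
                mul_le_mul_of_nonneg_right h1 (Real.rpow_nonneg (norm_nonneg b) 2)
            _ = ‖b‖ ^ p := h2
      have hpos : (0:ℝ) ≤ ‖a‖ ^ (p - 2) := Real.rpow_nonneg (norm_nonneg a) _
      nlinarith [mul_le_mul_of_nonneg_left hb2 (by linarith : (0:ℝ) ≤ p / 2)]
    · -- ‖a‖ < ‖b‖
      push_neg at hBA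
      have hB : (0:ℝ) < ‖b‖ := lt_of_le_of_lt (norm_nonneg a) hBA
      have hap : (0:ℝ) ≤ ‖a‖ ^ p := Real.rpow_nonneg (norm_nonneg a) p
      have bound1 : ‖a + b‖ ^ p ≤ (2:ℝ) ^ p * ‖b‖ ^ p := by
        calc ‖a + b‖ ^ p ≤ (2 * ‖b‖) ^ p := by
              apply Real.rpow_le_rpow (norm_nonneg _) _ hp0.le
              calc ‖a + b‖ ≤ ‖a‖ + ‖b‖ := norm_add_le a b
                _ ≤ 2 * ‖b‖ := by linarith
          _ = (2:ℝ) ^ p * ‖b‖ ^ p := Real.mul_rpow (by norm_num) (norm_nonneg b)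
      have bound3 : -(p * ‖a‖ ^ (p - 2) * ⟪a, b⟫) ≤ p * ‖b‖ ^ p := by
        have hcs : |⟪a, b⟫| ≤ ‖a‖ * ‖b‖ := abs_real_inner_le_norm a b
        have hpos : (0:ℝ) ≤ ‖a‖ ^ (p - 2) := Real.rpow_nonneg (norm_nonneg a) _
        have hn : -⟪a, b⟫ ≤ ‖a‖ * ‖b‖ := (neg_le_abs _).trans hcs
        have h0 : (0:ℝ) ≤ p * ‖a‖ ^ (p - 2) := mul_nonneg hp0.le hpos
        have h1 : -(p * ‖a‖ ^ (p - 2) * ⟪a, b⟫) ≤ p * ‖a‖ ^ (p - 2) * (‖a‖ * ‖b‖) := by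
          have := mul_le_mul_of_nonneg_left hn h0
          linarith
        have h2 : ‖a‖ ^ (p - 2) * ‖a‖ = ‖a‖ ^ (p - 1) := by
          nth_rewrite 2 [← Real.rpow_one ‖a‖]
          rw [← Real.rpow_add hA]; ring_nf
        have h3 : ‖a‖ ^ (p - 1) ≤ ‖b‖ ^ (p - 1) :=
          Real.rpow_le_rpow (norm_nonneg a) hBA.le (by linarith)
        have h4 : ‖b‖ ^ (p - 1) * ‖b‖ = ‖b‖ ^ p := by
          nth_rewrite 2 [← Real.rpow_one ‖b‖]
          rw [← Real.rpow_add hB]; ring_nf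
        calc -(p * ‖a‖ ^ (p - 2) * ⟪a, b⟫) ≤ p * ‖a‖ ^ (p - 2) * (‖a‖ * ‖b‖) := h1
          _ = p * (‖a‖ ^ (p - 1) * ‖b‖) := by rw [← h2]; ring
          _ ≤ p * (‖b‖ ^ (p - 1) * ‖b‖) := by
              apply mul_le_mul_of_nonneg_left _ hp0.le
              exact mul_le_mul_of_nonneg_right h3 hB.le
          _ = p * ‖b‖ ^ p := by rw [h4]
      nlinarith
end

section
/- (Elementary vector inequality, case p > 2, upper bound.) Let n ≥ 1 and let p > 2. For all ξ₁, ξ₂ ∈ ℝⁿ: |ξ₁ + ξ₂|^p − |ξ₁|^p − p |ξ₁|^{p−2} ⟨ξ₁, ξ₂⟩ ≤ (p(p−1)/2) (|ξ₁| + |ξ₂|)^{p−2} |ξ₂|². -/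
set_option maxHeartbeats 1000000 in
lemma key_eps (p a b s ε : ℝ) (hp : 2 < p) (ha : 0 ≤ a) (hb : 0 ≤ b)
    (hs : |s| ≤ a * b) (hε : 0 < ε) :
    (a^2 + 2*s + b^2 + ε)^(p/2) - (a^2 + ε)^(p/2) - p * (a^2 + ε)^(p/2 - 1) * s
      ≤ p * (p-1) / 2 * ((a+b)^2 + ε)^(p/2 - 1) * b^2 := by
  obtain ⟨hs1, hs2⟩ := abs_le.mp hs
  set c : ℝ := p/2 with hc
  have hc1 : 1 < c := by rw [hc]; linarith
  have hqpos : ∀ t : ℝ, 0 < a^2 + 2*t*s + t^2*b^2 + ε := by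
    intro t
    rcases le_total 0 t with h | h
    · nlinarith [sq_nonneg (a - t*b), mul_nonneg h (sub_nonneg.mpr hs1)]
    · nlinarith [sq_nonneg (a + t*b), mul_nonpos_of_nonpos_of_nonneg h (by linarith : (0:ℝ) ≤ s + a*b)]
  have hqle : ∀ t ∈ Set.Icc (0:ℝ) 1, a^2 + 2*t*s + t^2*b^2 + ε ≤ (a+b)^2 + ε := by
    rintro t ⟨h0, h1⟩
    have : t^2 ≤ 1 := by nlinarith
    nlinarith [mul_nonneg ha hb, mul_le_mul_of_nonneg_left hs1 (by linarith : (0:ℝ) ≤ 2*t)]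
  set M : ℝ := p * (p-1) * ((a+b)^2 + ε)^(c-1) * b^2 with hM
  have hq' : ∀ t : ℝ, HasDerivAt (fun t : ℝ => a^2 + 2*t*s + t^2*b^2 + ε) (2*s + 2*t*b^2) t := by
    intro t
    have h1 : HasDerivAt (fun t : ℝ => 2*t*s) (2*s) t := by
      simpa using ((hasDerivAt_id t).const_mul 2).mul_const s
    have h2 : HasDerivAt (fun t : ℝ => t^2*b^2) (2*t*b^2) t := by
      simpa using (hasDerivAt_pow 2 t).mul_const (b^2)
    simpa using ((h1.const_add (a^2)).add h2).add_const ε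
  have hG' : ∀ t : ℝ, HasDerivAt (fun t : ℝ => (a^2 + 2*t*s + t^2*b^2 + ε)^c)
      (p * ((a^2 + 2*t*s + t^2*b^2 + ε)^(c-1) * (s + t*b^2))) t := by
    intro t
    have := (hq' t).rpow_const (p := c) (Or.inl (hqpos t).ne')
    convert this using 1
    rw [hc]; ring
  have hG₁' : ∀ t : ℝ, HasDerivAt (fun t : ℝ => p * ((a^2 + 2*t*s + t^2*b^2 + ε)^(c-1) * (s + t*b^2)))
      (p * ((2*s + 2*t*b^2) * (c-1) * (a^2 + 2*t*s + t^2*b^2 + ε)^(c-1-1) * (s + t*b^2)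
        + (a^2 + 2*t*s + t^2*b^2 + ε)^(c-1) * b^2)) t := by
    intro t
    have h1 := (hq' t).rpow_const (p := c-1) (Or.inl (hqpos t).ne')
    have h2 : HasDerivAt (fun t : ℝ => s + t*b^2) (b^2) t := by
      simpa using ((hasDerivAt_id t).mul_const (b^2)).const_add s
    have := (h1.mul h2).const_mul p
    exact this
  have hG₂le : ∀ t ∈ Set.Icc (0:ℝ) 1,
      p * ((2*s + 2*t*b^2) * (c-1) * (a^2 + 2*t*s + t^2*b^2 + ε)^(c-1-1) * (s + t*b^2)
        + (a^2 + 2*t*s + t^2*b^2 + ε)^(c-1) * b^2) ≤ M := by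
    intro t ht
    set q := a^2 + 2*t*s + t^2*b^2 + ε with hqdef
    have hq0 : 0 < q := hqpos t
    have key : (s + t*b^2)^2 ≤ q * b^2 := by
      have : s^2 ≤ a^2 * b^2 := by nlinarith
      nlinarith [sq_nonneg b, hε.le]
    have e1 : q^(c-1-1) * q = q^(c-1) := by
      rw [← Real.rpow_add_one hq0.ne']; ring_nf
    have h1 : (2*s + 2*t*b^2) * (c-1) * q^(c-1-1) * (s + t*b^2)
        = 2*(c-1) * (q^(c-1-1) * (s + t*b^2)^2) := by ring
    have h2 : q^(c-1-1) * (s + t*b^2)^2 ≤ q^(c-1-1) * (q * b^2) :=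
      mul_le_mul_of_nonneg_left key (Real.rpow_nonneg hq0.le _)
    have h3 : q^(c-1) ≤ ((a+b)^2 + ε)^(c-1) :=
      Real.rpow_le_rpow hq0.le (hqle t ht) (by linarith)
    have hp0 : (0:ℝ) < p := by linarith
    calc p * ((2*s + 2*t*b^2) * (c-1) * q^(c-1-1) * (s + t*b^2) + q^(c-1) * b^2)
        ≤ p * (2*(c-1) * (q^(c-1-1) * (q*b^2)) + q^(c-1) * b^2) := by
          rw [h1]
          apply mul_le_mul_of_nonneg_left _ hp0.le
          have := mul_le_mul_of_nonneg_left h2 (by linarith : (0:ℝ) ≤ 2*(c-1))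
          linarith
      _ = p * (p-1) * q^(c-1) * b^2 := by
          have e2 : q^(c-1-1) * (q*b^2) = q^(c-1) * b^2 := by rw [← mul_assoc, e1]
          rw [e2, hc]; ring
      _ ≤ M := by
          rw [hM]
          have := mul_le_mul_of_nonneg_left h3 (by nlinarith : (0:ℝ) ≤ p*(p-1))
          nlinarith [Real.rpow_nonneg hq0.le (c-1), sq_nonneg b]
  -- step1 : G₁ t ≤ G₁ 0 + M * t on [0,1]
  have step1 : ∀ t ∈ Set.Icc (0:ℝ) 1,
      p * ((a^2 + 2*t*s + t^2*b^2 + ε)^(c-1) * (s + t*b^2)) ≤ p * ((a^2 + ε)^(c-1) * s) + M * t := by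
    have hanti : AntitoneOn (fun t : ℝ => p * ((a^2 + 2*t*s + t^2*b^2 + ε)^(c-1) * (s + t*b^2)) - M * t)
        (Set.Icc 0 1) := by
      have hder : ∀ t : ℝ, HasDerivAt
          (fun t : ℝ => p * ((a^2 + 2*t*s + t^2*b^2 + ε)^(c-1) * (s + t*b^2)) - M * t)
          (p * ((2*s + 2*t*b^2) * (c-1) * (a^2 + 2*t*s + t^2*b^2 + ε)^(c-1-1) * (s + t*b^2)
            + (a^2 + 2*t*s + t^2*b^2 + ε)^(c-1) * b^2) - M) t := by
        intro t
        have hm : HasDerivAt (fun t : ℝ => M * t) M t := by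
          simpa using (hasDerivAt_id t).const_mul M
        exact (hG₁' t).sub hm
      apply antitoneOn_of_deriv_nonpos (convex_Icc 0 1)
      · exact fun t _ => (hder t).differentiableAt.continuousAt.continuousWithinAt
      · exact fun t _ => (hder t).differentiableAt.differentiableWithinAt
      · intro t ht
        rw [interior_Icc] at ht
        rw [(hder t).deriv]
        have := hG₂le t ⟨ht.1.le, ht.2.le⟩
        linarith
    intro t ht
    have h := hanti (Set.left_mem_Icc.mpr zero_le_one) ht ht.1
    simp only at h
    have h0 : a^2 + 2*(0:ℝ)*s + (0:ℝ)^2*b^2 + ε = a^2 + ε := by norm_num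
    rw [h0] at h
    norm_num at h
    linarith
  -- final antitone
  have hder2 : ∀ t : ℝ, HasDerivAt (fun t : ℝ => (a^2 + 2*t*s + t^2*b^2 + ε)^c
      - (p * ((a^2 + ε)^(c-1) * s)) * t - M/2 * t^2)
      (p * ((a^2 + 2*t*s + t^2*b^2 + ε)^(c-1) * (s + t*b^2))
        - p * ((a^2 + ε)^(c-1) * s) - M/2 * (2*t)) t := by
    intro t
    have h2 : HasDerivAt (fun t : ℝ => (p * ((a^2 + ε)^(c-1) * s)) * t)
        (p * ((a^2 + ε)^(c-1) * s)) t := by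
      simpa using (hasDerivAt_id t).const_mul (p * ((a^2 + ε)^(c-1) * s))
    have h3 : HasDerivAt (fun t : ℝ => M/2 * t^2) (M/2 * (2*t)) t := by
      have := (hasDerivAt_pow 2 t).const_mul (M/2)
      norm_num at this
      convert this using 1
    exact ((hG' t).sub h2).sub h3
  have hanti2 : AntitoneOn (fun t : ℝ => (a^2 + 2*t*s + t^2*b^2 + ε)^c
      - (p * ((a^2 + ε)^(c-1) * s)) * t - M/2 * t^2) (Set.Icc 0 1) := by
    apply antitoneOn_of_deriv_nonpos (convex_Icc 0 1)
    · exact fun t _ => (hder2 t).differentiableAt.continuousAt.continuousWithinAt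
    · exact fun t _ => (hder2 t).differentiableAt.differentiableWithinAt
    · intro t ht
      rw [interior_Icc] at ht
      rw [(hder2 t).deriv]
      have := step1 t ⟨ht.1.le, ht.2.le⟩
      linarith
  have hfinal := hanti2 (Set.left_mem_Icc.mpr zero_le_one) (Set.right_mem_Icc.mpr zero_le_one) zero_le_one
  simp only at hfinal
  have e0 : a^2 + 2*(0:ℝ)*s + (0:ℝ)^2*b^2 + ε = a^2 + ε := by norm_num
  have e1 : a^2 + 2*(1:ℝ)*s + (1:ℝ)^2*b^2 + ε = a^2 + 2*s + b^2 + ε := by norm_num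
  rw [e0, e1] at hfinal
  norm_num at hfinal
  rw [hM] at hfinal
  linarith

open Filter Topology

lemma rpow_tendsto_aux (x₀ c : ℝ) (hc : 0 ≤ c) :
    Tendsto (fun ε : ℝ => (x₀ + ε) ^ c) (𝓝[>] 0) (𝓝 (x₀ ^ c)) := by
  have h1 : Tendsto (fun ε : ℝ => x₀ + ε) (𝓝[>] 0) (𝓝 x₀) := by
    have : Tendsto (fun ε : ℝ => x₀ + ε) (𝓝 0) (𝓝 (x₀ + 0)) :=
      (continuous_const.add continuous_id).tendsto 0
    rw [add_zero] at this
    exact this.mono_left nhdsWithin_le_nhds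
  exact ((Real.continuousAt_rpow_const x₀ c (Or.inr hc)).tendsto).comp h1

lemma key_scalar (p a b s : ℝ) (hp : 2 < p) (ha : 0 ≤ a) (hb : 0 ≤ b)
    (hs : |s| ≤ a * b) :
    (a^2 + 2*s + b^2)^(p/2) - (a^2)^(p/2) - p * (a^2)^(p/2 - 1) * s
      ≤ p * (p-1) / 2 * ((a+b)^2)^(p/2 - 1) * b^2 := by
  have hc1 : (0:ℝ) ≤ p/2 := by linarith
  have hc2 : (0:ℝ) ≤ p/2 - 1 := by linarith
  have hL : Tendsto (fun ε : ℝ => (a^2 + 2*s + b^2 + ε)^(p/2) - (a^2 + ε)^(p/2)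
      - p * (a^2 + ε)^(p/2 - 1) * s) (𝓝[>] 0)
      (𝓝 ((a^2 + 2*s + b^2)^(p/2) - (a^2)^(p/2) - p * (a^2)^(p/2 - 1) * s)) := by
    exact ((rpow_tendsto_aux (a^2 + 2*s + b^2) (p/2) hc1).sub
      (rpow_tendsto_aux (a^2) (p/2) hc1)).sub
      (((rpow_tendsto_aux (a^2) (p/2 - 1) hc2).const_mul p).mul_const s)
  have hR : Tendsto (fun ε : ℝ => p * (p-1) / 2 * ((a+b)^2 + ε)^(p/2 - 1) * b^2) (𝓝[>] 0)
      (𝓝 (p * (p-1) / 2 * ((a+b)^2)^(p/2 - 1) * b^2)) :=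
    ((rpow_tendsto_aux ((a+b)^2) (p/2 - 1) hc2).const_mul (p * (p-1) / 2)).mul_const (b^2)
  refine le_of_tendsto_of_tendsto hL hR ?_
  filter_upwards [self_mem_nhdsWithin] with ε (hε : 0 < ε)
  exact key_eps p a b s ε hp ha hb hs hε

open scoped RealInnerProductSpace

/-- Elementary vector inequality, case `p > 2`, upper bound. -/
theorem vector_inequality_p_gt_two_upper
    (n : ℕ) (hn : 1 ≤ n) (p : ℝ) (hp : 2 < p) :
    ∀ ξ₁ ξ₂ : EuclideanSpace ℝ (Fin n),
      ‖ξ₁ + ξ₂‖ ^ p - ‖ξ₁‖ ^ p - p * ‖ξ₁‖ ^ (p - 2) * ⟪ξ₁, ξ₂⟫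
        ≤ p * (p - 1) / 2 * (‖ξ₁‖ + ‖ξ₂‖) ^ (p - 2) * ‖ξ₂‖ ^ 2 := by
  intro ξ₁ ξ₂
  have hrw : ∀ (x q : ℝ), 0 ≤ x → x ^ (2*q) = (x^2) ^ q := by
    intro x q hx
    rw [Real.rpow_mul hx, Real.rpow_two]
  have hrwA : ∀ x : ℝ, 0 ≤ x → x ^ p = (x^2) ^ (p/2) := by
    intro x hx
    rw [← hrw x (p/2) hx]
    congr 1
    ring
  have hrwB : ∀ x : ℝ, 0 ≤ x → x ^ (p-2) = (x^2) ^ (p/2 - 1) := by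
    intro x hx
    rw [← hrw x (p/2 - 1) hx]
    congr 1
    ring
  have h1 : ‖ξ₁ + ξ₂‖ ^ p = (‖ξ₁‖^2 + 2*⟪ξ₁, ξ₂⟫ + ‖ξ₂‖^2) ^ (p/2) := by
    rw [← norm_add_sq_real]
    exact hrwA _ (norm_nonneg _)
  have h2 : ‖ξ₁‖ ^ p = (‖ξ₁‖^2) ^ (p/2) := by
    exact hrwA _ (norm_nonneg _)
  have h3 : ‖ξ₁‖ ^ (p-2) = (‖ξ₁‖^2) ^ (p/2 - 1) := by
    exact hrwB _ (norm_nonneg _)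
  have h4 : (‖ξ₁‖ + ‖ξ₂‖) ^ (p-2) = ((‖ξ₁‖ + ‖ξ₂‖)^2) ^ (p/2 - 1) := by
    exact hrwB _ (by positivity)
  rw [h1, h2, h3, h4]
  exact key_scalar p ‖ξ₁‖ ‖ξ₂‖ ⟪ξ₁, ξ₂⟫ hp (norm_nonneg _) (norm_nonneg _)
    (abs_real_inner_le_norm ξ₁ ξ₂)
end

section
/- (Divergence identity for the weighted Grushin vector field built from ρ.) Let 1 < p < Q. At every point (x,y) ∈ ℝ^{d+k} with x ≠ 0, one has div_μ ( ρ^{1−p} |∇_μ ρ|^{p−2} ∇_μ ρ ) = (Q − p) |x|^{pμ} / ρ^{p(1+μ)}, where ∇_μ ρ = (∇_x ρ, |x|^μ ∇_y ρ), |∇_μ ρ| = |x|^μ/ρ^μ, and for a vector field (u, v) with u taking values in ℝ^d and v in ℝ^k, div_μ(u, v) = div_x u + |x|^μ div_y v. -/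
open MeasureTheory Real
open scoped RealInnerProductSpace ENNReal

/-- Divergence of a vector field on `ℝ^n`. -/
noncomputable def divE {n : ℕ} (u : EuclideanSpace ℝ (Fin n) → EuclideanSpace ℝ (Fin n))
    (x : EuclideanSpace ℝ (Fin n)) : ℝ :=
  ∑ i, ⟪fderiv ℝ u x (EuclideanSpace.single i 1), EuclideanSpace.single i 1⟫

/-- The Grushin operator `G_μ = Δ_x + |x|^{2μ} Δ_y` applied to `f`. -/
noncomputable def grushinOp (μ : ℝ) {d k : ℕ}
    (f : EuclideanSpace ℝ (Fin d) × EuclideanSpace ℝ (Fin k) → ℝ)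
    (z : EuclideanSpace ℝ (Fin d) × EuclideanSpace ℝ (Fin k)) : ℝ :=
  divE (fun x => gradient (fun x' => f (x', z.2)) x) z.1
    + ‖z.1‖ ^ (2 * μ) * divE (fun y => gradient (fun y' => f (z.1, y')) y) z.2

/-- The Grushin divergence `div_μ(u,v) = div_x u + |x|^μ div_y v` of a vector field
on `ℝ^d × ℝ^k` whose first component takes values in `ℝ^d` and second in `ℝ^k`. -/
noncomputable def divMu (μ : ℝ) {d k : ℕ}
    (V : EuclideanSpace ℝ (Fin d) × EuclideanSpace ℝ (Fin k) →
         EuclideanSpace ℝ (Fin d) × EuclideanSpace ℝ (Fin k))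
    (z : EuclideanSpace ℝ (Fin d) × EuclideanSpace ℝ (Fin k)) : ℝ :=
  divE (fun x => (V (x, z.2)).1) z.1 + ‖z.1‖ ^ μ * divE (fun y => (V (z.1, y)).2) z.2

/-! ### Auxiliary lemmas -/

section Aux

lemma GDI.sqr_rpow (a b : ℝ) (ha : 0 ≤ a) : (a ^ b) ^ 2 = a ^ (2 * b) := by
  rw [← Real.rpow_natCast (a ^ b) 2, ← Real.rpow_mul ha]
  congr 1; push_cast; ring

lemma GDI.sum_single (n : ℕ) (a : EuclideanSpace ℝ (Fin n)) :
    (∑ i, a i • EuclideanSpace.single i (1 : ℝ)) = a := by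
  ext j
  have : (∑ i, a i • EuclideanSpace.single i (1 : ℝ)) j
      = ∑ i, (a i • EuclideanSpace.single i (1 : ℝ)) j := by rw [WithLp.ofLp_sum, Finset.sum_apply]
  rw [this]; simp [EuclideanSpace.single_apply]

lemma GDI.divE_congr {n : ℕ} {f g : EuclideanSpace ℝ (Fin n) → EuclideanSpace ℝ (Fin n)}
    {x : EuclideanSpace ℝ (Fin n)} (h : f =ᶠ[nhds x] g) : divE f x = divE g x := by
  unfold divE
  rw [Filter.EventuallyEq.fderiv_eq h]

lemma GDI.divE_smul_id {n : ℕ} (c : EuclideanSpace ℝ (Fin n) → ℝ)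
    (L : EuclideanSpace ℝ (Fin n) →L[ℝ] ℝ) (a : EuclideanSpace ℝ (Fin n))
    (h : HasFDerivAt c L a) :
    divE (fun x => c x • x) a = L a + n * c a := by
  have H : HasFDerivAt (fun x => c x • x)
      (c a • ContinuousLinearMap.id ℝ _ + L.smulRight a) a := by
    exact h.smul (hasFDerivAt_id a)
  unfold divE
  rw [H.fderiv]
  have key : ∀ i : Fin n,
      ⟪(c a • ContinuousLinearMap.id ℝ (EuclideanSpace ℝ (Fin n)) + L.smulRight a)
        (EuclideanSpace.single i 1), EuclideanSpace.single i 1⟫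
      = c a + L (EuclideanSpace.single i 1) * a i := by
    intro i
    simp only [ContinuousLinearMap.add_apply, ContinuousLinearMap.smul_apply,
      ContinuousLinearMap.id_apply, ContinuousLinearMap.smulRight_apply]
    rw [inner_add_left, real_inner_smul_left, real_inner_smul_left]
    simp [EuclideanSpace.inner_single_left, EuclideanSpace.inner_single_right, EuclideanSpace.single_apply, mul_comm]
  rw [Finset.sum_congr rfl fun i _ => key i, Finset.sum_add_distrib]
  have h2 : (∑ i : Fin n, L (EuclideanSpace.single i 1) * a i) = L a := by
    calc (∑ i : Fin n, L (EuclideanSpace.single i 1) * a i)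
        = ∑ i : Fin n, L (a i • EuclideanSpace.single i 1) := by simp [mul_comm]
      _ = L (∑ i, a i • EuclideanSpace.single i 1) := by rw [map_sum]
      _ = L a := by rw [GDI.sum_single]
  rw [h2]
  simp [Finset.sum_const, add_comm, mul_comm]

lemma GDI.hasGradientAt_of_innerSL {F : Type*} [NormedAddCommGroup F] [InnerProductSpace ℝ F]
    [CompleteSpace F] {f : F → ℝ} {r : ℝ} {w x : F}
    (h : HasFDerivAt f (r • (innerSL ℝ w : F →L[ℝ] ℝ)) x) : HasGradientAt f (r • w) x := by
  rw [hasGradientAt_iff_hasFDerivAt]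
  refine h.congr_fderiv ?_
  ext y
  simp [real_inner_smul_left]

lemma GDI.hasFDerivAt_norm_rpow {m : ℕ} (x : EuclideanSpace ℝ (Fin m)) (hx : x ≠ 0) (e : ℝ) :
    HasFDerivAt (fun x' : EuclideanSpace ℝ (Fin m) => (‖x'‖ ^ e : ℝ))
      ((e * ‖x‖ ^ (e - 2)) • (innerSL ℝ x : EuclideanSpace ℝ (Fin m) →L[ℝ] ℝ)) x := by
  have hn : (0:ℝ) < ‖x‖ := norm_pos_iff.2 hx
  have ht : (0:ℝ) < ‖x‖ ^ 2 := by positivity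
  have hfun : (fun x' : EuclideanSpace ℝ (Fin m) => (‖x'‖ ^ e : ℝ))
      = (fun s : ℝ => s ^ (e / 2)) ∘ (fun x' : EuclideanSpace ℝ (Fin m) => (‖x'‖ ^ 2 : ℝ)) := by
    funext x'
    simp only [Function.comp_apply]
    rw [← Real.rpow_natCast ‖x'‖ 2, ← Real.rpow_mul (norm_nonneg _)]
    congr 1
    push_cast; ring
  rw [hfun]
  have D1 : HasFDerivAt (fun x' : EuclideanSpace ℝ (Fin m) => (‖x'‖ ^ 2 : ℝ))
      (2 • (innerSL ℝ x : EuclideanSpace ℝ (Fin m) →L[ℝ] ℝ)) x :=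
    (hasStrictFDerivAt_norm_sq x).hasFDerivAt
  have D2 : HasDerivAt (fun s : ℝ => s ^ (e / 2))
      ((e / 2) * (‖x‖ ^ 2 : ℝ) ^ (e / 2 - 1)) (‖x‖ ^ 2) :=
    Real.hasDerivAt_rpow_const (Or.inl ht.ne')
  have D3 := D2.comp_hasFDerivAt x D1
  refine D3.congr_fderiv ?_
  ext y
  simp only [ContinuousLinearMap.smul_apply, smul_eq_mul]
  have h1 : ((‖x‖ ^ 2 : ℝ)) ^ (e / 2 - 1) = ‖x‖ ^ (e - 2) := by
    rw [← Real.rpow_natCast ‖x‖ 2, ← Real.rpow_mul (norm_nonneg _)]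
    congr 1; push_cast; ring
  rw [h1]
  ring

lemma GDI.hasFDerivAt_grho_x (μ : ℝ) (hμ : 0 < μ) {d k : ℕ}
    (b : EuclideanSpace ℝ (Fin k)) (x : EuclideanSpace ℝ (Fin d)) (hx : x ≠ 0) :
    HasFDerivAt (fun x' => grho μ (x', b))
      (((‖x‖ ^ (2 + 2*μ) + (1+μ)^2 * ‖b‖^2) ^ (1/(2+2*μ) - 1) * ‖x‖ ^ (2*μ)) •
        (innerSL ℝ x : EuclideanSpace ℝ (Fin d) →L[ℝ] ℝ)) x := by
  have hn : (0:ℝ) < ‖x‖ := norm_pos_iff.2 hx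
  have hμ2 : (0:ℝ) < 2 + 2*μ := by linarith
  have hu : (0:ℝ) < ‖x‖ ^ (2 + 2*μ) + (1+μ)^2 * ‖b‖^2 := by
    have := Real.rpow_pos_of_pos hn (2 + 2*μ); positivity
  have Din : HasFDerivAt
      (fun x' : EuclideanSpace ℝ (Fin d) => (‖x'‖ ^ (2 + 2*μ) + (1+μ)^2 * ‖b‖^2 : ℝ))
      (((2 + 2*μ) * ‖x‖ ^ (2 + 2*μ - 2)) • (innerSL ℝ x : EuclideanSpace ℝ (Fin d) →L[ℝ] ℝ)) x :=
    (GDI.hasFDerivAt_norm_rpow x hx (2 + 2*μ)).add_const _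
  have Dout : HasDerivAt (fun s : ℝ => s ^ (1/(2+2*μ)))
      ((1/(2+2*μ)) * (‖x‖ ^ (2 + 2*μ) + (1+μ)^2 * ‖b‖^2) ^ (1/(2+2*μ) - 1))
      (‖x‖ ^ (2 + 2*μ) + (1+μ)^2 * ‖b‖^2) :=
    Real.hasDerivAt_rpow_const (Or.inl hu.ne')
  have D := Dout.comp_hasFDerivAt x Din
  refine D.congr_fderiv ?_
  ext y
  simp only [ContinuousLinearMap.smul_apply, smul_eq_mul]
  have h1 : ‖x‖ ^ (2 + 2*μ - 2) = ‖x‖ ^ (2*μ) := by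
    congr 1; ring
  rw [h1]
  field_simp

lemma GDI.hasFDerivAt_grho_y (μ : ℝ) (hμ : 0 < μ) {d k : ℕ}
    (a : EuclideanSpace ℝ (Fin d)) (b : EuclideanSpace ℝ (Fin k)) (ha : a ≠ 0) :
    HasFDerivAt (fun y => grho μ (a, y))
      (((‖a‖ ^ (2 + 2*μ) + (1+μ)^2 * ‖b‖^2) ^ (1/(2+2*μ) - 1) * (1+μ)) •
        (innerSL ℝ b : EuclideanSpace ℝ (Fin k) →L[ℝ] ℝ)) b := by
  have hμ2 : (0:ℝ) < 2 + 2*μ := by linarith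
  have han : (0:ℝ) < ‖a‖ := norm_pos_iff.2 ha
  have hA : (0:ℝ) < ‖a‖ ^ (2 + 2*μ) := Real.rpow_pos_of_pos han _
  have hu : (0:ℝ) < ‖a‖ ^ (2 + 2*μ) + (1+μ)^2 * ‖b‖^2 := by positivity
  have D1 : HasFDerivAt (fun y : EuclideanSpace ℝ (Fin k) => (‖y‖^2 : ℝ))
      (2 • (innerSL ℝ b : EuclideanSpace ℝ (Fin k) →L[ℝ] ℝ)) b :=
    (hasStrictFDerivAt_norm_sq b).hasFDerivAt
  have D2 : HasFDerivAt (fun y : EuclideanSpace ℝ (Fin k) =>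
      (‖a‖ ^ (2 + 2*μ) + (1+μ)^2 * ‖y‖^2 : ℝ))
      (((1+μ)^2 : ℝ) • (2 • (innerSL ℝ b : EuclideanSpace ℝ (Fin k) →L[ℝ] ℝ))) b :=
    (D1.const_mul ((1+μ)^2)).const_add _
  have D4 : HasDerivAt (fun s : ℝ => s ^ (1/(2+2*μ)))
      ((1/(2+2*μ)) * (‖a‖ ^ (2 + 2*μ) + (1+μ)^2 * ‖b‖^2) ^ (1/(2+2*μ) - 1))
      (‖a‖ ^ (2 + 2*μ) + (1+μ)^2 * ‖b‖^2) :=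
    Real.hasDerivAt_rpow_const (Or.inl hu.ne')
  have D5 := D4.comp_hasFDerivAt b D2
  have hfun : (fun y : EuclideanSpace ℝ (Fin k) => grho μ (a, y))
      = (fun s : ℝ => s ^ (1/(2+2*μ))) ∘
        (fun y : EuclideanSpace ℝ (Fin k) => (‖a‖ ^ (2 + 2*μ) + (1+μ)^2 * ‖y‖^2 : ℝ)) := rfl
  rw [hfun]
  refine D5.congr_fderiv ?_
  ext y
  simp only [ContinuousLinearMap.smul_apply, smul_eq_mul]
  field_simp
  ring

lemma GDI.gradient_grho_x (μ : ℝ) (hμ : 0 < μ) {d k : ℕ}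
    (b : EuclideanSpace ℝ (Fin k)) (x : EuclideanSpace ℝ (Fin d)) (hx : x ≠ 0) :
    gradient (fun x' => grho μ (x', b)) x
      = ((‖x‖ ^ (2 + 2*μ) + (1+μ)^2 * ‖b‖^2) ^ (1/(2+2*μ) - 1) * ‖x‖ ^ (2*μ)) • x :=
  (GDI.hasGradientAt_of_innerSL (GDI.hasFDerivAt_grho_x μ hμ b x hx)).gradient

lemma GDI.gradient_grho_y (μ : ℝ) (hμ : 0 < μ) {d k : ℕ}
    (a : EuclideanSpace ℝ (Fin d)) (b : EuclideanSpace ℝ (Fin k)) (ha : a ≠ 0) :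
    gradient (fun y => grho μ (a, y)) b
      = ((‖a‖ ^ (2 + 2*μ) + (1+μ)^2 * ‖b‖^2) ^ (1/(2+2*μ) - 1) * (1+μ)) • b :=
  (GDI.hasGradientAt_of_innerSL (GDI.hasFDerivAt_grho_y μ hμ a b ha)).gradient

lemma GDI.pairNorm_sq_identity (μ n u r : ℝ) (hn : 0 < n) (hu : 0 < u)
    (hrel : u = n^(2+2*μ) + (1+μ)^2 * r) :
    (u^(1/(2+2*μ)-1) * n^(2*μ))^2 * n^2 + (n^μ * (u^(1/(2+2*μ)-1) * (1+μ)))^2 * r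
      = (n^μ * u^(1/(2+2*μ)-1/2))^2 := by
  simp only [mul_pow]
  simp only [GDI.sqr_rpow u _ hu.le, GDI.sqr_rpow n _ hn.le]
  have key : n^(2*(2*μ)) * n^(2:ℕ) = n^(2*μ) * n^(2+2*μ) := by
    rw [← Real.rpow_natCast n 2, ← Real.rpow_add hn, ← Real.rpow_add hn]
    congr 1; push_cast; ring
  have key2 : u^(2*(1/(2+2*μ)-1/2)) = u^(2*(1/(2+2*μ)-1)) * u := by
    rw [show 2*(1/(2+2*μ)-1/2) = 2*(1/(2+2*μ)-1) + 1 by ring, Real.rpow_add hu, Real.rpow_one]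
  rw [key2]
  linear_combination u^(2*(1/(2+2*μ)-1)) * key - n^(2*μ)*u^(2*(1/(2+2*μ)-1)) * hrel

lemma GDI.pairNorm_gradMu (μ : ℝ) (hμ : 0 < μ) {d k : ℕ}
    (z : EuclideanSpace ℝ (Fin d) × EuclideanSpace ℝ (Fin k)) (hz : z.1 ≠ 0) :
    pairNorm (gradMu μ (grho μ) z)
      = ‖z.1‖^μ * (‖z.1‖ ^ (2 + 2*μ) + (1+μ)^2 * ‖z.2‖^2) ^ (1/(2+2*μ) - 1/2) := by
  have hn : (0:ℝ) < ‖z.1‖ := norm_pos_iff.2 hz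
  have hμ2 : (0:ℝ) < 2 + 2*μ := by linarith
  have hu : (0:ℝ) < ‖z.1‖ ^ (2 + 2*μ) + (1+μ)^2 * ‖z.2‖^2 := by
    have := Real.rpow_pos_of_pos hn (2 + 2*μ); positivity
  set u : ℝ := ‖z.1‖ ^ (2 + 2*μ) + (1+μ)^2 * ‖z.2‖^2 with hudef
  have hgm : gradMu μ (grho μ) z
      = ((u ^ (1/(2+2*μ) - 1) * ‖z.1‖ ^ (2*μ)) • z.1,
          (‖z.1‖ ^ μ) • ((u ^ (1/(2+2*μ) - 1) * (1+μ)) • z.2)) := by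
    unfold gradMu
    rw [GDI.gradient_grho_x μ hμ z.2 z.1 hz, GDI.gradient_grho_y μ hμ z.1 z.2 hz]
  rw [hgm]
  unfold pairNorm
  simp only
  have hc1 : (0:ℝ) ≤ u ^ (1/(2+2*μ) - 1) * ‖z.1‖ ^ (2*μ) := by positivity
  have hc2 : (0:ℝ) ≤ ‖z.1‖ ^ μ := by positivity
  have hc3 : (0:ℝ) ≤ u ^ (1/(2+2*μ) - 1) * (1+μ) := by positivity
  rw [norm_smul, norm_smul, norm_smul]
  simp only [Real.norm_eq_abs, abs_of_nonneg hc1, abs_of_nonneg hc2, abs_of_nonneg hc3]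
  have hsum : (u^(1/(2+2*μ)-1) * ‖z.1‖^(2*μ))^2 * ‖z.1‖^2
        + (‖z.1‖^μ * (u^(1/(2+2*μ)-1) * (1+μ)))^2 * ‖z.2‖^2
      = (‖z.1‖^μ * u^(1/(2+2*μ)-1/2))^2 :=
    GDI.pairNorm_sq_identity μ ‖z.1‖ u (‖z.2‖^2) hn hu hudef
  rw [show (u^(1/(2+2*μ)-1) * ‖z.1‖^(2*μ) * ‖z.1‖)^2
        + (‖z.1‖^μ * (u^(1/(2+2*μ)-1) * (1+μ) * ‖z.2‖))^2
      = (u^(1/(2+2*μ)-1) * ‖z.1‖^(2*μ))^2 * ‖z.1‖^2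
        + (‖z.1‖^μ * (u^(1/(2+2*μ)-1) * (1+μ)))^2 * ‖z.2‖^2 by ring, hsum]
  exact Real.sqrt_sq (by positivity)

lemma GDI.coeff_x (μ p n u : ℝ) (hμ : 0 < μ) (hn : 0 < n) (hu : 0 < u) :
    (u^(1/(2+2*μ)))^(1-p) * (n^μ * u^(1/(2+2*μ)-1/2))^(p-2) * (u^(1/(2+2*μ)-1) * n^(2*μ))
      = n^(p*μ) * u^(-(p/2)) := by
  have hs : (2+2*μ) ≠ 0 := by positivity
  rw [← Real.rpow_mul hu.le,
      Real.mul_rpow (Real.rpow_nonneg hn.le _) (Real.rpow_nonneg hu.le _),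
      ← Real.rpow_mul hn.le, ← Real.rpow_mul hu.le]
  calc u^((1/(2+2*μ))*(1-p)) * (n^(μ*(p-2)) * u^((1/(2+2*μ)-1/2)*(p-2))) *
        (u^(1/(2+2*μ)-1) * n^(2*μ))
      = (n^(μ*(p-2)) * n^(2*μ)) *
        (u^((1/(2+2*μ))*(1-p)) * u^((1/(2+2*μ)-1/2)*(p-2)) * u^(1/(2+2*μ)-1)) := by ring
    _ = n^(μ*(p-2)+2*μ) *
        u^((1/(2+2*μ))*(1-p) + (1/(2+2*μ)-1/2)*(p-2) + (1/(2+2*μ)-1)) := by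
        rw [← Real.rpow_add hn, ← Real.rpow_add hu, ← Real.rpow_add hu]
    _ = n^(p*μ) * u^(-(p/2)) := by
        congr 1
        · congr 1; ring
        · congr 1; field_simp; ring

lemma GDI.coeff_y (μ p n u : ℝ) (hμ : 0 < μ) (hn : 0 < n) (hu : 0 < u) :
    (u^(1/(2+2*μ)))^(1-p) * (n^μ * u^(1/(2+2*μ)-1/2))^(p-2) * (n^μ * (u^(1/(2+2*μ)-1) * (1+μ)))
      = ((1+μ) * n^((p-1)*μ)) * u^(-(p/2)) := by
  have hs : (2+2*μ) ≠ 0 := by positivity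
  rw [← Real.rpow_mul hu.le,
      Real.mul_rpow (Real.rpow_nonneg hn.le _) (Real.rpow_nonneg hu.le _),
      ← Real.rpow_mul hn.le, ← Real.rpow_mul hu.le]
  calc u^((1/(2+2*μ))*(1-p)) * (n^(μ*(p-2)) * u^((1/(2+2*μ)-1/2)*(p-2))) *
        (n^μ * (u^(1/(2+2*μ)-1) * (1+μ)))
      = (1+μ) * ((n^(μ*(p-2)) * n^μ) *
        (u^((1/(2+2*μ))*(1-p)) * u^((1/(2+2*μ)-1/2)*(p-2)) * u^(1/(2+2*μ)-1))) := by ring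
    _ = (1+μ) * (n^(μ*(p-2)+μ) *
        u^((1/(2+2*μ))*(1-p) + (1/(2+2*μ)-1/2)*(p-2) + (1/(2+2*μ)-1))) := by
        rw [← Real.rpow_add hn, ← Real.rpow_add hu, ← Real.rpow_add hu]
    _ = ((1+μ) * n^((p-1)*μ)) * u^(-(p/2)) := by
        rw [mul_assoc]
        congr 2
        · congr 1; ring
        · congr 1; field_simp; ring

lemma GDI.final_algebra (p μ Q dd kk n2 n22 A B2 C D2 E Y Z u r : ℝ)
    (R1 : E * n2 = A) (R2 : B2 * n2 = n22) (R3 : C * D2 = A) (R4 : Z * u = Y)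
    (R5 : u = n22 + (1+μ)^2*r) (hQ : Q = dd + (1+μ)*kk) :
    (A*(-(p/2)*Z*((2+2*μ)*B2)) + Y*(p*μ*E))*n2 + dd*(A*Y)
      + C*((((1+μ)*D2) * (-(p/2)*Z*((1+μ)^2*2)))*r + kk*(((1+μ)*D2)*Y))
      = (Q-p)*(A*Y) := by
  have hA : A = C * D2 := R3.symm
  linear_combination (-(p*(1+μ))*A*Z)*R2 + (p*μ*Y)*R1
    + (-(p*(1+μ)^3)*Z*r + kk*(1+μ)*Y)*R3 + (-(p*(1+μ))*A)*R4
    + (p*(1+μ)*A*Z)*R5 - (A*Y)*hQ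

end Aux


lemma GDI.Vslice_x (μ p : ℝ) (hμ : 0 < μ) {d k : ℕ}
    (b : EuclideanSpace ℝ (Fin k)) (x : EuclideanSpace ℝ (Fin d)) (hx : x ≠ 0) :
    ((grho μ (x,b) ^ (1-p) * pairNorm (gradMu μ (grho μ) (x,b)) ^ (p-2)) •
        gradMu μ (grho μ) (x,b)).1
      = (‖x‖^(p*μ) * ((‖x‖^(2+2*μ)+(1+μ)^2*‖b‖^2))^(-(p/2))) • x := by
  have hnx : (0:ℝ) < ‖x‖ := norm_pos_iff.2 hx
  have hμ2 : (0:ℝ) < 2 + 2*μ := by linarith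
  have hux : (0:ℝ) < ‖x‖^(2+2*μ)+(1+μ)^2*‖b‖^2 := by
    have := Real.rpow_pos_of_pos hnx (2+2*μ); positivity
  rw [Prod.smul_fst]
  have h1 : (gradMu μ (grho μ) (x,b)).1 = gradient (fun x' => grho μ (x', b)) x := rfl
  rw [h1, GDI.gradient_grho_x μ hμ b x hx, GDI.pairNorm_gradMu μ hμ (x,b) hx]
  dsimp only
  rw [smul_smul]
  congr 1
  have h2 : grho μ (x,b) = (‖x‖^(2+2*μ)+(1+μ)^2*‖b‖^2)^(1/(2+2*μ)) := rfl
  rw [h2]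
  exact GDI.coeff_x μ p ‖x‖ _ hμ hnx hux

lemma GDI.Vslice_y (μ p : ℝ) (hμ : 0 < μ) {d k : ℕ}
    (a : EuclideanSpace ℝ (Fin d)) (y : EuclideanSpace ℝ (Fin k)) (ha : a ≠ 0) :
    ((grho μ (a,y) ^ (1-p) * pairNorm (gradMu μ (grho μ) (a,y)) ^ (p-2)) •
        gradMu μ (grho μ) (a,y)).2
      = (((1+μ) * ‖a‖^((p-1)*μ)) * ((‖a‖^(2+2*μ)+(1+μ)^2*‖y‖^2))^(-(p/2))) • y := by
  have hna : (0:ℝ) < ‖a‖ := norm_pos_iff.2 ha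
  have hμ2 : (0:ℝ) < 2 + 2*μ := by linarith
  have huy : (0:ℝ) < ‖a‖^(2+2*μ)+(1+μ)^2*‖y‖^2 := by
    have := Real.rpow_pos_of_pos hna (2+2*μ); positivity
  rw [Prod.smul_snd]
  have h1 : (gradMu μ (grho μ) (a,y)).2
      = (‖a‖ ^ μ) • gradient (fun y' => grho μ (a, y')) y := rfl
  rw [h1, GDI.gradient_grho_y μ hμ a y ha, GDI.pairNorm_gradMu μ hμ (a,y) ha]
  dsimp only
  rw [smul_smul, smul_smul]
  congr 1
  have h2 : grho μ (a,y) = (‖a‖^(2+2*μ)+(1+μ)^2*‖y‖^2)^(1/(2+2*μ)) := rfl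
  rw [h2, mul_assoc]
  exact GDI.coeff_y μ p ‖a‖ _ hμ hna huy


/-- Divergence identity for the weighted Grushin vector field built from `ρ`. -/
theorem grushin_divergence_identity
    (d k : ℕ) (hd : 1 ≤ d) (hk : 1 ≤ k) (μ : ℝ) (hμ : 0 < μ)
    (Q : ℝ) (hQ : Q = d + (1 + μ) * k)
    (p : ℝ) (hp1 : 1 < p) (hpQ : p < Q) :
    ∀ z : EuclideanSpace ℝ (Fin d) × EuclideanSpace ℝ (Fin k), z.1 ≠ 0 →
      divMu μ
          (fun w => (grho μ w ^ (1 - p) * pairNorm (gradMu μ (grho μ) w) ^ (p - 2)) •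
            gradMu μ (grho μ) w) z
        = (Q - p) * ‖z.1‖ ^ (p * μ) / grho μ z ^ (p * (1 + μ)) := by
  intro z hz1
  have hn : (0:ℝ) < ‖z.1‖ := norm_pos_iff.2 hz1
  have hμ2 : (0:ℝ) < 2 + 2*μ := by linarith
  set u : ℝ := ‖z.1‖^(2+2*μ) + (1+μ)^2*‖z.2‖^2 with hu_def
  have hu : (0:ℝ) < u := by
    rw [hu_def]
    have := Real.rpow_pos_of_pos hn (2+2*μ); positivity
  set V : EuclideanSpace ℝ (Fin d) × EuclideanSpace ℝ (Fin k) →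
      EuclideanSpace ℝ (Fin d) × EuclideanSpace ℝ (Fin k) :=
    fun w => (grho μ w ^ (1 - p) * pairNorm (gradMu μ (grho μ) w) ^ (p - 2)) •
      gradMu μ (grho μ) w with hV_def
  -- the scalar coefficient functions
  set c : EuclideanSpace ℝ (Fin d) → ℝ :=
    fun x => ‖x‖^(p*μ) * ((‖x‖^(2+2*μ)+(1+μ)^2*‖z.2‖^2))^(-(p/2)) with hc_def
  set M : ℝ := (1+μ) * ‖z.1‖^((p-1)*μ) with hM_def
  set h : EuclideanSpace ℝ (Fin k) → ℝ :=
    fun y => M * ((‖z.1‖^(2+2*μ)+(1+μ)^2*‖y‖^2))^(-(p/2)) with hh_def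
  -- x-slice divergence
  have hEx : (fun x => (V (x, z.2)).1) =ᶠ[nhds z.1] (fun x => c x • x) := by
    refine Filter.eventuallyEq_of_mem ((isOpen_ne (x := (0 : EuclideanSpace ℝ (Fin d)))).mem_nhds hz1) ?_
    intro x hx
    exact GDI.Vslice_x μ p hμ z.2 x hx
  have hEy : (fun y => (V (z.1, y)).2) = (fun y => h y • y) := by
    funext y
    exact GDI.Vslice_y μ p hμ z.1 y hz1
  -- derivative of c
  set Kc : ℝ := ‖z.1‖^(p*μ) * (-(p/2)*u^(-(p/2)-1)*((2+2*μ)*‖z.1‖^(2*μ)))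
      + u^(-(p/2)) * (p*μ*‖z.1‖^(p*μ-2)) with hKc_def
  have Dc : HasFDerivAt c (Kc • (innerSL ℝ z.1 :
      EuclideanSpace ℝ (Fin d) →L[ℝ] ℝ)) z.1 := by
    have D1 := GDI.hasFDerivAt_norm_rpow z.1 hz1 (p*μ)
    have Din := (GDI.hasFDerivAt_norm_rpow z.1 hz1 (2+2*μ)).add_const
      ((1+μ)^2*‖z.2‖^2)
    have Dout : HasDerivAt (fun s : ℝ => s ^ (-(p/2)))
        ((-(p/2)) * u ^ (-(p/2) - 1)) u :=
      Real.hasDerivAt_rpow_const (Or.inl hu.ne')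
    have D2 := Dout.comp_hasFDerivAt z.1 Din
    have Dc' := D1.mul D2
    refine Dc'.congr_fderiv ?_
    ext y
    simp only [ContinuousLinearMap.smul_apply, ContinuousLinearMap.add_apply,
      smul_eq_mul, Function.comp_apply]
    have hexp : ‖z.1‖^(2+2*μ-2) = ‖z.1‖^(2*μ) := by congr 1; ring
    have hexp2 : ‖z.1‖^(p*μ-2) = ‖z.1‖^(p*μ-2) := rfl
    rw [hKc_def, hexp]
    ring
  -- derivative of h
  set Kh : ℝ := M * (-(p/2)*u^(-(p/2)-1)*((1+μ)^2*2)) with hKh_def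
  have Dh : HasFDerivAt h (Kh • (innerSL ℝ z.2 :
      EuclideanSpace ℝ (Fin k) →L[ℝ] ℝ)) z.2 := by
    have D1 : HasFDerivAt (fun y : EuclideanSpace ℝ (Fin k) => (‖y‖^2 : ℝ))
        (2 • (innerSL ℝ z.2 : EuclideanSpace ℝ (Fin k) →L[ℝ] ℝ)) z.2 :=
      (hasStrictFDerivAt_norm_sq z.2).hasFDerivAt
    have D2 := (D1.const_mul ((1+μ)^2)).const_add (‖z.1‖^(2+2*μ))
    have Dout : HasDerivAt (fun s : ℝ => s ^ (-(p/2)))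
        ((-(p/2)) * u ^ (-(p/2) - 1)) u :=
      Real.hasDerivAt_rpow_const (Or.inl hu.ne')
    have D3 := Dout.comp_hasFDerivAt z.2 D2
    have D4 := D3.const_mul M
    refine D4.congr_fderiv ?_
    ext y
    simp only [ContinuousLinearMap.smul_apply, smul_eq_mul, Function.comp_apply]
    rw [hKh_def]
    ring
  -- compute the two divergences
  have hdivx : divE (fun x => (V (x, z.2)).1) z.1
      = Kc * ‖z.1‖^2 + d * c z.1 := by
    rw [GDI.divE_congr hEx, GDI.divE_smul_id c _ z.1 Dc]
    simp only [ContinuousLinearMap.smul_apply, smul_eq_mul, innerSL_apply_apply]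
    rw [real_inner_self_eq_norm_sq]
  have hdivy : divE (fun y => (V (z.1, y)).2) z.2
      = Kh * ‖z.2‖^2 + k * h z.2 := by
    rw [hEy, GDI.divE_smul_id h _ z.2 Dh]
    simp only [ContinuousLinearMap.smul_apply, smul_eq_mul, innerSL_apply_apply]
    rw [real_inner_self_eq_norm_sq]
  have hdm : divMu μ V z = divE (fun x => (V (x, z.2)).1) z.1
      + ‖z.1‖^μ * divE (fun y => (V (z.1, y)).2) z.2 := rfl
  rw [hdm, hdivx, hdivy]
  -- RHS conversion
  have hrpow : grho μ z ^ (p*(1+μ)) = u^(p/2) := by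
    have h2 : grho μ z = u^(1/(2+2*μ)) := rfl
    rw [h2, ← Real.rpow_mul hu.le]
    congr 1
    field_simp
  rw [hrpow]
  have hY : u^(-(p/2)) = (u^(p/2))⁻¹ := by
    rw [← Real.rpow_neg_one (u^(p/2)), ← Real.rpow_mul hu.le]
    congr 1; ring
  rw [div_eq_mul_inv, ← hY]
  -- atoms and relations
  have R1 : ‖z.1‖^(p*μ-2) * ‖z.1‖^(2:ℕ) = ‖z.1‖^(p*μ) := by
    rw [← Real.rpow_natCast ‖z.1‖ 2, ← Real.rpow_add hn]
    congr 1; push_cast; ring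
  have R2 : ‖z.1‖^(2*μ) * ‖z.1‖^(2:ℕ) = ‖z.1‖^(2+2*μ) := by
    rw [← Real.rpow_natCast ‖z.1‖ 2, ← Real.rpow_add hn]
    congr 1; push_cast; ring
  have R3 : ‖z.1‖^μ * ‖z.1‖^((p-1)*μ) = ‖z.1‖^(p*μ) := by
    rw [← Real.rpow_add hn]
    congr 1; ring
  have R4 : u^(-(p/2)-1) * u = u^(-(p/2)) := by
    have := Real.rpow_add hu (-(p/2)-1) 1
    rw [Real.rpow_one] at this
    rw [← this]
    congr 1; ring
  rw [hc_def, hh_def, hKc_def, hKh_def, hM_def]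
  simp only
  linear_combination (-(p*(1+μ))*‖z.1‖^(p*μ)*u^(-(p/2)-1))*R2
    + (p*μ*u^(-(p/2)))*R1
    + (-(p*(1+μ)^3)*u^(-(p/2)-1)*‖z.2‖^2 + (k:ℝ)*(1+μ)*u^(-(p/2)))*R3
    + (-(p*(1+μ))*‖z.1‖^(p*μ))*R4
    + (p*(1+μ)*‖z.1‖^(p*μ)*u^(-(p/2)-1))*hu_def
    - (‖z.1‖^(p*μ)*u^(-(p/2)))*hQ
end

section
/- (Local integrability criterion for anisotropic power weights near the origin.) Let a, b be real numbers with a + d > 0 and a + b + Q > 0. Then ∫_{B_2} |x|^a ρ(x,y)^b dx dy < ∞, where B_2 = {(x,y) ∈ ℝ^{d+k} : ρ(x,y) < 2}. -/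
open MeasureTheory Real
open scoped RealInnerProductSpace ENNReal

open Metric Set

lemma lintegral_rpow_norm_ball_lt_top (n : ℕ) (hn : 1 ≤ n) (p R : ℝ)
    (hp : -(n : ℝ) < p) (hR : 0 < R) :
    ∫⁻ x in Metric.ball (0 : EuclideanSpace ℝ (Fin n)) R,
      ENNReal.ofReal (‖x‖ ^ p) < ⊤ := by
  haveI : Nonempty (Fin n) := ⟨⟨0, hn⟩⟩
  haveI : Nontrivial (EuclideanSpace ℝ (Fin n)) := inferInstance
  rcases le_or_gt 0 p with hp0 | hp0
  · -- bounded integrand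
    calc ∫⁻ x in Metric.ball (0 : EuclideanSpace ℝ (Fin n)) R, ENNReal.ofReal (‖x‖ ^ p)
        ≤ ∫⁻ _ in Metric.ball (0 : EuclideanSpace ℝ (Fin n)) R, ENNReal.ofReal (R ^ p) := by
          refine lintegral_mono_ae ?_
          filter_upwards [ae_restrict_mem measurableSet_ball] with x hx
          exact ENNReal.ofReal_le_ofReal
            (Real.rpow_le_rpow (norm_nonneg _) (le_of_lt (by simpa using hx)) hp0)
      _ = volume (Metric.ball (0 : EuclideanSpace ℝ (Fin n)) R) * ENNReal.ofReal (R ^ p) := by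
          simp [lintegral_const, mul_comm]
      _ < ⊤ := ENNReal.mul_lt_top measure_ball_lt_top ENNReal.ofReal_lt_top
  · -- dyadic shells
    set r : ℕ → ℝ := fun j => R * (2⁻¹ : ℝ) ^ j with hr
    have hrpos : ∀ j, 0 < r j := fun j => by positivity
    have hsub : Metric.ball (0 : EuclideanSpace ℝ (Fin n)) R ⊆
        {0} ∪ ⋃ j : ℕ, (Metric.ball (0:EuclideanSpace ℝ (Fin n)) (r j) \
          Metric.ball (0:EuclideanSpace ℝ (Fin n)) (r (j+1))) := by
      intro x hx
      rcases eq_or_ne x 0 with h0 | h0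
      · exact Or.inl h0
      · refine Or.inr ?_
        have hxpos : 0 < ‖x‖ := norm_pos_iff.2 h0
        have hxR : ‖x‖ < R := by simpa using hx
        have hev : ∃ j : ℕ, r (j+1) ≤ ‖x‖ := by
          obtain ⟨j, hj⟩ := exists_pow_lt_of_lt_one (x := ‖x‖ / R) (by positivity)
            (by norm_num : (2⁻¹:ℝ) < 1)
          refine ⟨j, ?_⟩
          have h1 : 2⁻¹ ^ j * R < ‖x‖ := (lt_div_iff₀ hR).1 hj
          have h2 : (2⁻¹:ℝ) ^ (j+1) ≤ 2⁻¹ ^ j := by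
            rw [pow_succ]; nlinarith [pow_pos (by norm_num : (0:ℝ) < 2⁻¹) j]
          show R * 2⁻¹ ^ (j+1) ≤ ‖x‖
          nlinarith
        classical
        let j0 := Nat.find hev
        refine mem_iUnion.2 ⟨j0, ?_, ?_⟩
        · simp only [mem_ball, dist_zero_right]
          cases' Nat.eq_zero_or_pos j0 with h h
          · simpa [h, hr] using hxR
          · obtain ⟨m, hm⟩ := Nat.exists_eq_succ_of_ne_zero h.ne'
            have := Nat.find_min hev (m := m) (by omega)
            push_neg at this
            simpa [hm] using this
        · simp only [mem_ball, dist_zero_right, not_lt]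
          exact Nat.find_spec hev
    calc ∫⁻ x in Metric.ball (0 : EuclideanSpace ℝ (Fin n)) R, ENNReal.ofReal (‖x‖ ^ p)
        ≤ ∫⁻ x in ({0} ∪ ⋃ j : ℕ, (Metric.ball (0:EuclideanSpace ℝ (Fin n)) (r j) \
            Metric.ball (0:EuclideanSpace ℝ (Fin n)) (r (j+1)))),
            ENNReal.ofReal (‖x‖ ^ p) := lintegral_mono_set hsub
      _ ≤ (∫⁻ x in ({0} : Set (EuclideanSpace ℝ (Fin n))), ENNReal.ofReal (‖x‖ ^ p)) +
          ∑' j : ℕ, ∫⁻ x in (Metric.ball (0:EuclideanSpace ℝ (Fin n)) (r j) \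
            Metric.ball (0:EuclideanSpace ℝ (Fin n)) (r (j+1))), ENNReal.ofReal (‖x‖ ^ p) := by
          refine le_trans (lintegral_union_le _ _ _) (add_le_add_right (lintegral_iUnion_le _ _) _)
      _ < ⊤ := by
          have h0 : (∫⁻ x in ({0} : Set (EuclideanSpace ℝ (Fin n))),
              ENNReal.ofReal (‖x‖ ^ p)) = 0 := by
            rw [lintegral_singleton]
            simp [Real.zero_rpow hp0.ne]
          rw [h0, zero_add]
          set V := volume (Metric.ball (0 : EuclideanSpace ℝ (Fin n)) 1) with hV
          have hVlt : V < ⊤ := measure_ball_lt_top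
          set s : ℝ := (2⁻¹ : ℝ) with hs
          have hs0 : (0:ℝ) ≤ s := by norm_num [hs]
          set w : ℝ := s ^ ((n : ℝ) + p) with hw
          have hw0 : 0 ≤ w := Real.rpow_nonneg hs0 _
          have hw1 : w < 1 := Real.rpow_lt_one hs0 (by norm_num [hs]) (by linarith)
          set C0 : ℝ := R ^ ((n : ℝ) + p) * s ^ p with hC0
          have hterm : ∀ j : ℕ, (∫⁻ x in (Metric.ball (0:EuclideanSpace ℝ (Fin n)) (r j) \
              Metric.ball (0:EuclideanSpace ℝ (Fin n)) (r (j+1))), ENNReal.ofReal (‖x‖ ^ p))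
              ≤ ENNReal.ofReal C0 * (ENNReal.ofReal w) ^ j * V := by
            intro j
            have hb : ∀ x ∈ (Metric.ball (0:EuclideanSpace ℝ (Fin n)) (r j) \
                Metric.ball (0:EuclideanSpace ℝ (Fin n)) (r (j+1))),
                ENNReal.ofReal (‖x‖ ^ p) ≤ ENNReal.ofReal ((r (j+1)) ^ p) := by
              intro x hx
              have hxge : r (j+1) ≤ ‖x‖ := by
                have := hx.2; simpa [Metric.mem_ball, dist_zero_right, not_lt] using this
              exact ENNReal.ofReal_le_ofReal
                (Real.rpow_le_rpow_of_nonpos (hrpos _) hxge hp0.le)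
            calc (∫⁻ x in (Metric.ball (0:EuclideanSpace ℝ (Fin n)) (r j) \
                  Metric.ball (0:EuclideanSpace ℝ (Fin n)) (r (j+1))), ENNReal.ofReal (‖x‖ ^ p))
                ≤ ∫⁻ _ in (Metric.ball (0:EuclideanSpace ℝ (Fin n)) (r j) \
                  Metric.ball (0:EuclideanSpace ℝ (Fin n)) (r (j+1))),
                  ENNReal.ofReal ((r (j+1)) ^ p) := by
                  refine lintegral_mono_ae ?_
                  filter_upwards [ae_restrict_mem
                    (measurableSet_ball.diff measurableSet_ball)] with x hx
                  exact hb x hx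
              _ = ENNReal.ofReal ((r (j+1)) ^ p) *
                  volume ((Metric.ball (0:EuclideanSpace ℝ (Fin n)) (r j) \
                  Metric.ball (0:EuclideanSpace ℝ (Fin n)) (r (j+1)))) := setLIntegral_const _ _
              _ ≤ ENNReal.ofReal ((r (j+1)) ^ p) *
                  volume (Metric.ball (0:EuclideanSpace ℝ (Fin n)) (r j)) := by
                  exact mul_le_mul_right (measure_mono diff_subset) _
              _ = ENNReal.ofReal ((r (j+1)) ^ p) *
                  (ENNReal.ofReal ((r j) ^ n) * V) := by
                  rw [Measure.addHaar_ball volume 0 (hrpos j).le, finrank_euclideanSpace_fin]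
              _ = ENNReal.ofReal C0 * (ENNReal.ofReal w) ^ j * V := by
                  rw [← mul_assoc, ← ENNReal.ofReal_mul (by positivity),
                    ← ENNReal.ofReal_pow hw0, ← ENNReal.ofReal_mul (by positivity)]
                  congr 2
                  have hspos : (0:ℝ) < s := by norm_num [hs]
                  have e1 : (r (j+1)) ^ p = R ^ p * s ^ (((j:ℝ)+1) * p) := by
                    show (R * s ^ (j+1)) ^ p = _
                    rw [Real.mul_rpow hR.le (by positivity), ← Real.rpow_natCast s (j+1),
                      ← Real.rpow_mul hs0]
                    push_cast; ring_nf
                  have e2 : (r j) ^ n = R ^ ((n:ℕ):ℝ) * s ^ ((j:ℝ) * (n:ℕ)) := by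
                    show (R * s ^ j) ^ n = _
                    rw [mul_pow, ← pow_mul, ← Real.rpow_natCast R n,
                      ← Real.rpow_natCast s (j*n)]
                    push_cast; ring_nf
                  have e3 : w ^ j = s ^ (((n:ℝ)+p) * j) := by
                    rw [hw, ← Real.rpow_natCast (s ^ ((n:ℝ)+p)) j, ← Real.rpow_mul hs0]
                  calc (r (j+1)) ^ p * (r j) ^ n
                      = (R ^ p * R ^ ((n:ℕ):ℝ)) * (s ^ (((j:ℝ)+1) * p) * s ^ ((j:ℝ) * (n:ℕ))) := by
                        rw [e1, e2]; ring
                    _ = R ^ (p + ((n:ℕ):ℝ)) * s ^ ((((j:ℝ)+1) * p) + ((j:ℝ) * (n:ℕ))) := by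
                        rw [← Real.rpow_add hR, ← Real.rpow_add hspos]
                    _ = R ^ ((n:ℝ) + p) * s ^ (p + ((n:ℝ)+p)*(j:ℝ)) := by
                        rw [show p + ((n:ℕ):ℝ) = (n:ℝ) + p by push_cast; ring,
                          show (((j:ℝ)+1) * p) + ((j:ℝ) * (n:ℕ)) = p + ((n:ℝ)+p)*(j:ℝ) by
                            push_cast; ring]
                    _ = C0 * w ^ j := by
                        rw [Real.rpow_add hspos, e3, hC0]; ring
          calc (∑' j : ℕ, ∫⁻ x in (Metric.ball (0:EuclideanSpace ℝ (Fin n)) (r j) \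
                Metric.ball (0:EuclideanSpace ℝ (Fin n)) (r (j+1))), ENNReal.ofReal (‖x‖ ^ p))
              ≤ ∑' j : ℕ, ENNReal.ofReal C0 * (ENNReal.ofReal w) ^ j * V :=
                ENNReal.tsum_le_tsum hterm
            _ = ENNReal.ofReal C0 * V * ∑' j : ℕ, (ENNReal.ofReal w) ^ j := by
                rw [← ENNReal.tsum_mul_left]
                congr 1; ext j; ring
            _ < ⊤ := by
                rw [ENNReal.tsum_geometric]
                refine ENNReal.mul_lt_top (ENNReal.mul_lt_top ENNReal.ofReal_lt_top hVlt) ?_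
                refine ENNReal.inv_lt_top.2 ?_
                rw [tsub_pos_iff_lt]
                exact ENNReal.ofReal_lt_one.2 hw1

set_option maxHeartbeats 1000000 in
/-- Local integrability criterion for anisotropic power weights near the origin. -/
theorem grushin_weight_integrable_near_origin
    (d k : ℕ) (hd : 1 ≤ d) (hk : 1 ≤ k) (μ : ℝ) (hμ : 0 < μ)
    (Q : ℝ) (hQ : Q = d + (1 + μ) * k)
    (a b : ℝ) (ha : 0 < a + d) (hab : 0 < a + b + Q) :
    ∫⁻ z in {z : EuclideanSpace ℝ (Fin d) × EuclideanSpace ℝ (Fin k) | grho μ z < 2},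
        ENNReal.ofReal (‖z.1‖ ^ a * grho μ z ^ b) < ⊤ := by
  haveI : Nonempty (Fin d) := ⟨⟨0, hd⟩⟩
  haveI : Nonempty (Fin k) := ⟨⟨0, hk⟩⟩
  haveI : Nontrivial (EuclideanSpace ℝ (Fin d)) := inferInstance
  haveI : Nontrivial (EuclideanSpace ℝ (Fin k)) := inferInstance
  haveI : NullSingletonClass (volume : Measure (EuclideanSpace ℝ (Fin d))) := inferInstance
  haveI : NullSingletonClass (volume : Measure (EuclideanSpace ℝ (Fin k))) := inferInstance
  have h2μ : (0:ℝ) < 2 + 2*μ := by linarith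
  have h1μ : (0:ℝ) < 1 + μ := by linarith
  set E := EuclideanSpace ℝ (Fin d) × EuclideanSpace ℝ (Fin k) with hE
  set S : Set E := {z : E | grho μ z < 2} with hSdef
  have hbase_nonneg : ∀ z : E, 0 ≤ ‖z.1‖ ^ (2 + 2 * μ) + (1 + μ) ^ 2 * ‖z.2‖ ^ 2 := by
    intro z; positivity
  have hρ_nonneg : ∀ z : E, 0 ≤ grho μ z := fun z => Real.rpow_nonneg (hbase_nonneg z) _
  have hx_le : ∀ z : E, ‖z.1‖ ≤ grho μ z := by
    intro z
    have h1 : ‖z.1‖ ^ (2 + 2*μ) ≤ ‖z.1‖ ^ (2 + 2 * μ) + (1 + μ) ^ 2 * ‖z.2‖ ^ 2 := by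
      nlinarith [sq_nonneg ‖z.2‖, sq_nonneg (1+μ)]
    have h2 : (‖z.1‖ ^ (2 + 2*μ)) ^ (1/(2+2*μ)) ≤ grho μ z :=
      Real.rpow_le_rpow (by positivity) h1 (by positivity)
    calc ‖z.1‖ = (‖z.1‖ ^ (2 + 2*μ)) ^ (1/(2+2*μ)) := by
          rw [← Real.rpow_mul (norm_nonneg _), mul_one_div_cancel h2μ.ne', Real.rpow_one]
      _ ≤ grho μ z := h2
  have hy_le : ∀ z : E, (1+μ) * ‖z.2‖ ≤ (grho μ z) ^ (1+μ) := by
    intro z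
    have h1 : ((1+μ) * ‖z.2‖) ^ (2:ℝ) ≤ ‖z.1‖ ^ (2 + 2 * μ) + (1 + μ) ^ 2 * ‖z.2‖ ^ 2 := by
      rw [Real.rpow_two, mul_pow]
      nlinarith [Real.rpow_nonneg (norm_nonneg z.1) (2+2*μ)]
    have h2 : (((1+μ) * ‖z.2‖) ^ (2:ℝ)) ^ (1/(2+2*μ)) ≤ grho μ z := by
      rw [grho]
      exact Real.rpow_le_rpow (by positivity) h1 (by positivity)
    have h3 : (((1+μ) * ‖z.2‖) ^ (2:ℝ)) ^ (1/(2+2*μ)) = ((1+μ) * ‖z.2‖) ^ ((2:ℝ)/(2+2*μ)) := by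
      rw [← Real.rpow_mul (by positivity)]; ring_nf
    rw [h3] at h2
    have h7 : (((1+μ) * ‖z.2‖) ^ ((2:ℝ)/(2+2*μ))) ^ ((1:ℝ)+μ) ≤ (grho μ z) ^ ((1:ℝ)+μ) :=
      Real.rpow_le_rpow (Real.rpow_nonneg (by positivity) _) h2 h1μ.le
    calc (1+μ) * ‖z.2‖ = (((1+μ) * ‖z.2‖) ^ ((2:ℝ)/(2+2*μ))) ^ ((1:ℝ)+μ) := by
          rw [← Real.rpow_mul (by positivity),
            show (2:ℝ)/(2+2*μ)*(1+μ) = 1 by field_simp, Real.rpow_one]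
      _ ≤ _ := h7
  -- measurability of S
  have hgc : Continuous (fun z : E => grho μ z) := by
    have c1 : Continuous fun z : E => ‖z.1‖ ^ (2+2*μ) :=
      (continuous_fst.norm).rpow_const (fun z => Or.inr h2μ.le)
    have c2 : Continuous fun z : E => (1+μ)^2 * ‖z.2‖^2 :=
      continuous_const.mul ((continuous_snd.norm).pow 2)
    exact (c1.add c2).rpow_const (fun z => Or.inr (by positivity))
  have hSmeas : MeasurableSet S := (isOpen_lt hgc continuous_const).measurableSet
  set C : ℝ := (2:ℝ)^((1:ℝ)+μ)/(1+μ) + 1 with hCdef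
  have hCpos : 0 < C := by positivity
  have hsub : S ⊆ (Metric.ball (0 : EuclideanSpace ℝ (Fin d)) 2) ×ˢ
      (Metric.ball (0 : EuclideanSpace ℝ (Fin k)) C) := by
    intro z hz
    have hz2 : grho μ z < 2 := hz
    constructor
    · simp only [mem_ball, dist_zero_right]
      exact lt_of_le_of_lt (hx_le z) hz2
    · simp only [mem_ball, dist_zero_right]
      have h1 : (grho μ z)^((1:ℝ)+μ) ≤ 2^((1:ℝ)+μ) :=
        Real.rpow_le_rpow (hρ_nonneg z) hz2.le h1μ.le
      have h2 : (1+μ)*‖z.2‖ ≤ 2^((1:ℝ)+μ) := le_trans (hy_le z) h1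
      have h3 : ‖z.2‖ ≤ 2^((1:ℝ)+μ)/(1+μ) := by rw [le_div_iff₀ h1μ]; linarith
      calc ‖z.2‖ ≤ 2^((1:ℝ)+μ)/(1+μ) := h3
        _ < C := lt_add_one _
  -- a.e. nonvanishing
  have hae : ∀ᵐ z : E, z.1 ≠ 0 ∧ z.2 ≠ 0 := by
    have h1 : volume {z : E | z.1 = 0} = 0 := by
      have he : {z : E | z.1 = 0} =
          ({0} : Set (EuclideanSpace ℝ (Fin d))) ×ˢ (univ : Set (EuclideanSpace ℝ (Fin k))) := by
        ext z
        exact ⟨fun h => ⟨h, Set.mem_univ _⟩, fun h => h.1⟩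
      rw [he, Measure.volume_eq_prod, Measure.prod_prod, measure_singleton, zero_mul]
    have h2 : volume {z : E | z.2 = 0} = 0 := by
      have he : {z : E | z.2 = 0} =
          (univ : Set (EuclideanSpace ℝ (Fin d))) ×ˢ ({0} : Set (EuclideanSpace ℝ (Fin k))) := by
        ext z
        exact ⟨fun h => ⟨Set.mem_univ _, h⟩, fun h => h.2⟩
      rw [he, Measure.volume_eq_prod, Measure.prod_prod, measure_singleton, mul_zero]
    rw [ae_iff]
    refine measure_mono_null ?_ (measure_union_null h1 h2)
    intro z hz
    simp only [mem_setOf_eq, not_and_or, not_not] at hz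
    exact hz
  -- choice of exponents
  obtain ⟨p, q, c, hc, hpd, hqk, hbound⟩ :
      ∃ p q c : ℝ, 0 < c ∧ -(d:ℝ) < p ∧ -(k:ℝ) < q ∧
        ∀ᵐ z : E, z ∈ S → ‖z.1‖ ^ a * grho μ z ^ b ≤ c * (‖z.1‖ ^ p * ‖z.2‖ ^ q) := by
    have hdk : (1:ℝ) ≤ k := by exact_mod_cast hk
    rcases le_or_gt 0 b with hb0 | hb0
    · refine ⟨a, 0, 2 ^ b, by positivity, by linarith, by linarith, ae_of_all _ ?_⟩
      intro z hz
      have hz2 : grho μ z < 2 := hz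
      have h1 : grho μ z ^ b ≤ 2 ^ b := Real.rpow_le_rpow (hρ_nonneg z) hz2.le hb0
      calc ‖z.1‖^a * grho μ z ^ b ≤ ‖z.1‖^a * 2^b :=
            mul_le_mul_of_nonneg_left h1 (Real.rpow_nonneg (norm_nonneg _) _)
        _ = 2^b * (‖z.1‖^a * ‖z.2‖^(0:ℝ)) := by rw [Real.rpow_zero]; ring
    · have hbne : (0:ℝ) < -b := by linarith
      set L : ℝ := max 0 (1 + (1+μ)*k/b) with hL
      set U : ℝ := min 1 ((a+d)/(-b)) with hU
      have hLU : L < U := by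
        apply max_lt <;> apply lt_min
        · norm_num
        · exact div_pos ha hbne
        · have : (1+μ)*k/b < 0 := div_neg_of_pos_of_neg (by positivity) hb0
          linarith
        · rw [lt_div_iff₀ hbne]
          have he : (1 + (1+μ)*k/b) * (-b) = -b - (1+μ)*k := by field_simp [hb0.ne]; ring
          rw [he, hQ] at *
          linarith [hab]
      set θ : ℝ := (L + U)/2 with hθ
      have hθL : L < θ := by rw [hθ]; linarith
      have hθU : θ < U := by rw [hθ]; linarith
      have hθ0 : 0 < θ := lt_of_le_of_lt (le_max_left 0 _) hθL
      have hθ1 : θ < 1 := lt_of_lt_of_le hθU (min_le_left _ _)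
      refine ⟨a + θ*b, (1-θ)*b/(1+μ), (1+μ) ^ ((1-θ)*b/(1+μ)), by positivity, ?_, ?_, ?_⟩
      · have h := lt_of_lt_of_le hθU (min_le_right _ _)
        rw [lt_div_iff₀ hbne] at h
        nlinarith
      · have h := lt_of_le_of_lt (le_max_right 0 (1 + (1+μ)*k/b)) hθL
        have h2 : (θ-1)*b < (1+μ)*k :=
          (div_lt_iff_of_neg hb0).1 (show (1+μ)*k/b < θ - 1 by linarith)
        rw [lt_div_iff₀ h1μ]
        nlinarith
      · filter_upwards [hae] with z hz _
        have hxpos : 0 < ‖z.1‖ := norm_pos_iff.2 hz.1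
        have hypos : 0 < ‖z.2‖ := norm_pos_iff.2 hz.2
        have hρpos : 0 < grho μ z := by
          rw [grho]
          have hb1 : 0 < ‖z.1‖ ^ (2 + 2*μ) := Real.rpow_pos_of_pos hxpos _
          have hb2 : 0 < ‖z.1‖ ^ (2 + 2 * μ) + (1 + μ) ^ 2 * ‖z.2‖ ^ 2 := by positivity
          exact Real.rpow_pos_of_pos hb2 _
        set B : ℝ := ((1+μ)*‖z.2‖) ^ (1/(1+μ)) with hB
        have hBpos : 0 < B := Real.rpow_pos_of_pos (by positivity) _
        have hBle : B ≤ grho μ z := by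
          calc B ≤ ((grho μ z)^((1:ℝ)+μ))^(1/(1+μ)) :=
                Real.rpow_le_rpow (by positivity) (hy_le z) (by positivity)
            _ = grho μ z := by
                rw [← Real.rpow_mul (hρ_nonneg z), mul_one_div_cancel h1μ.ne', Real.rpow_one]
        have hGM : ‖z.1‖^θ * B^(1-θ) ≤ grho μ z := by
          calc ‖z.1‖^θ * B^(1-θ) ≤ (grho μ z)^θ * (grho μ z)^(1-θ) :=
              mul_le_mul (Real.rpow_le_rpow (norm_nonneg _) (hx_le z) hθ0.le)
                (Real.rpow_le_rpow hBpos.le hBle (by linarith))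
                (Real.rpow_nonneg hBpos.le _) (Real.rpow_nonneg (hρ_nonneg z) _)
            _ = grho μ z := by rw [← Real.rpow_add hρpos]; simp
        have hGMpos : 0 < ‖z.1‖^θ * B^(1-θ) := by positivity
        have hρb : grho μ z ^ b ≤ (‖z.1‖^θ * B^(1-θ))^b :=
          Real.rpow_le_rpow_of_nonpos hGMpos hGM hb0.le
        have hexp : (‖z.1‖^θ * B^(1-θ))^b =
            ‖z.1‖^(θ*b) * ((1+μ)^((1-θ)*b/(1+μ)) * ‖z.2‖^((1-θ)*b/(1+μ))) := by
          rw [Real.mul_rpow (Real.rpow_nonneg (norm_nonneg _) _) (Real.rpow_nonneg hBpos.le _),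
            ← Real.rpow_mul (norm_nonneg _), hB,
            ← Real.rpow_mul (by positivity : (0:ℝ) ≤ (1+μ)*‖z.2‖),
            ← Real.rpow_mul (by positivity : (0:ℝ) ≤ (1+μ)*‖z.2‖),
            show 1/(1+μ)*(1-θ)*b = (1-θ)*b/(1+μ) by ring,
            Real.mul_rpow h1μ.le (norm_nonneg _)]
        calc ‖z.1‖^a * grho μ z ^ b ≤ ‖z.1‖^a * (‖z.1‖^θ * B^(1-θ))^b :=
              mul_le_mul_of_nonneg_left hρb (Real.rpow_nonneg (norm_nonneg _) _)
          _ = (1+μ)^((1-θ)*b/(1+μ)) * (‖z.1‖^(a+θ*b) * ‖z.2‖^((1-θ)*b/(1+μ))) := by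
              rw [hexp, Real.rpow_add hxpos a (θ*b)]; ring
  -- main estimate
  have hdlt : -(d:ℝ) < p := hpd
  calc ∫⁻ z in S, ENNReal.ofReal (‖z.1‖ ^ a * grho μ z ^ b)
      ≤ ∫⁻ z in S, ENNReal.ofReal (c * (‖z.1‖ ^ p * ‖z.2‖ ^ q)) := by
        refine lintegral_mono_ae ?_
        filter_upwards [ae_restrict_mem hSmeas, ae_restrict_of_ae hbound] with z h1 h2
        exact ENNReal.ofReal_le_ofReal (h2 h1)
    _ ≤ ∫⁻ z in (Metric.ball (0 : EuclideanSpace ℝ (Fin d)) 2) ×ˢ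
          (Metric.ball (0 : EuclideanSpace ℝ (Fin k)) C),
          ENNReal.ofReal (c * (‖z.1‖ ^ p * ‖z.2‖ ^ q)) := lintegral_mono_set hsub
    _ = ENNReal.ofReal c *
        ((∫⁻ x in Metric.ball (0 : EuclideanSpace ℝ (Fin d)) 2, ENNReal.ofReal (‖x‖^p)) *
         (∫⁻ y in Metric.ball (0 : EuclideanSpace ℝ (Fin k)) C, ENNReal.ofReal (‖y‖^q))) := by
        simp_rw [ENNReal.ofReal_mul hc.le,
          ENNReal.ofReal_mul (Real.rpow_nonneg (norm_nonneg _) _)]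
        rw [lintegral_const_mul' _ _ ENNReal.ofReal_ne_top]
        congr 1
        rw [show (volume : Measure E) = Measure.prod volume volume from Measure.volume_eq_prod _ _,
          ← Measure.prod_restrict]
        exact lintegral_prod_mul
          ((measurable_norm.pow_const p).ennreal_ofReal).aemeasurable
          ((measurable_norm.pow_const q).ennreal_ofReal).aemeasurable
    _ < ⊤ := by
        refine ENNReal.mul_lt_top ENNReal.ofReal_lt_top (ENNReal.mul_lt_top ?_ ?_)
        · exact lintegral_rpow_norm_ball_lt_top d hd p 2 hpd (by norm_num)
        · exact lintegral_rpow_norm_ball_lt_top k hk q C hqk hCpos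
end

section
/- (Integrability criterion for anisotropic power weights at infinity.) Let a, b be real numbers with a + d > 0 and a + b + Q < 0. Then ∫_{ℝ^{d+k} ∖ B_1} |x|^a ρ(x,y)^b dx dy < ∞, where B_1 = {(x,y) ∈ ℝ^{d+k} : ρ(x,y) < 1}. -/
open MeasureTheory Real
open scoped RealInnerProductSpace ENNReal

lemma aux_finite_lintegral_ball_rpow (n : ℕ) {s : ℝ} (hs : -(n : ℝ) < s) :
    ∫⁻ x : EuclideanSpace ℝ (Fin n) in Metric.ball 0 1,
      ENNReal.ofReal (‖x‖ ^ s) < ⊤ := by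
  rcases le_or_gt 0 s with h | h
  · calc ∫⁻ x : EuclideanSpace ℝ (Fin n) in Metric.ball 0 1, ENNReal.ofReal (‖x‖ ^ s)
        ≤ ∫⁻ _x : EuclideanSpace ℝ (Fin n) in Metric.ball 0 1, 1 := by
          refine setLIntegral_mono' measurableSet_ball fun x hx => ?_
          have : ‖x‖ ^ s ≤ 1 :=
            Real.rpow_le_one (norm_nonneg _) (le_of_lt (mem_ball_zero_iff.mp hx)) h
          simpa using ENNReal.ofReal_le_ofReal this
      _ = volume (Metric.ball (0 : EuclideanSpace ℝ (Fin n)) 1) := by simp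
      _ < ⊤ := measure_ball_lt_top
  · have hs0 : s ≠ 0 := ne_of_lt h
    have hmeas : Measurable fun x : EuclideanSpace ℝ (Fin n) => ‖x‖ ^ s :=
      measurable_norm.pow measurable_const
    rw [show (∫⁻ x : EuclideanSpace ℝ (Fin n) in Metric.ball 0 1,
        ENNReal.ofReal (‖x‖ ^ s)) = ∫⁻ x, ENNReal.ofReal (‖x‖ ^ s)
          ∂(volume.restrict (Metric.ball (0 : EuclideanSpace ℝ (Fin n)) 1)) from rfl,
      lintegral_eq_lintegral_meas_le _
        (Filter.Eventually.of_forall fun x => Real.rpow_nonneg (norm_nonneg _) _)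
        hmeas.aemeasurable]
    set ν := volume.restrict (Metric.ball (0 : EuclideanSpace ℝ (Fin n)) 1)
    have key : ∀ t : ℝ, 0 < t →
        ν {x : EuclideanSpace ℝ (Fin n) | t ≤ ‖x‖ ^ s}
          ≤ volume (Metric.closedBall (0 : EuclideanSpace ℝ (Fin n)) (t ^ (1 / s))) := by
      intro t ht
      have hsub : {x : EuclideanSpace ℝ (Fin n) | t ≤ ‖x‖ ^ s}
          ⊆ Metric.closedBall (0 : EuclideanSpace ℝ (Fin n)) (t ^ (1 / s)) := by
        intro x hx
        simp only [Set.mem_setOf_eq] at hx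
        rcases eq_or_ne x 0 with rfl | hx0
        · exfalso
          rw [norm_zero, Real.zero_rpow hs0] at hx
          linarith
        · have hxpos : (0 : ℝ) < ‖x‖ := norm_pos_iff.mpr hx0
          have h1 : (‖x‖ ^ s) ^ (1 / s) ≤ t ^ (1 / s) :=
            Real.rpow_le_rpow_of_nonpos ht hx (one_div_nonpos.mpr h.le)
          have h2 : (‖x‖ ^ s) ^ (1 / s) = ‖x‖ := by
            rw [← Real.rpow_mul (le_of_lt hxpos), mul_one_div, div_self hs0, Real.rpow_one]
          rw [Metric.mem_closedBall, dist_zero_right, ← h2]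
          exact h1
      calc ν {x : EuclideanSpace ℝ (Fin n) | t ≤ ‖x‖ ^ s}
          ≤ volume {x : EuclideanSpace ℝ (Fin n) | t ≤ ‖x‖ ^ s} :=
            Measure.restrict_le_self _
        _ ≤ _ := measure_mono hsub
    have hns : (n : ℝ) / s < -1 := by
      rw [div_lt_iff_of_neg h]
      linarith
    calc ∫⁻ t in Set.Ioi (0 : ℝ), ν {x : EuclideanSpace ℝ (Fin n) | t ≤ ‖x‖ ^ s}
        ≤ ∫⁻ t in Set.Ioc (0 : ℝ) 1 ∪ Set.Ioi 1,
            ν {x : EuclideanSpace ℝ (Fin n) | t ≤ ‖x‖ ^ s} :=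
          lintegral_mono_set Set.Ioi_subset_Ioc_union_Ioi
      _ ≤ (∫⁻ t in Set.Ioc (0 : ℝ) 1, ν {x : EuclideanSpace ℝ (Fin n) | t ≤ ‖x‖ ^ s})
            + ∫⁻ t in Set.Ioi (1 : ℝ), ν {x : EuclideanSpace ℝ (Fin n) | t ≤ ‖x‖ ^ s} :=
          lintegral_union_le _ _ _
      _ < ⊤ := by
        refine ENNReal.add_lt_top.2 ⟨?_, ?_⟩
        · calc ∫⁻ t in Set.Ioc (0 : ℝ) 1, ν {x : EuclideanSpace ℝ (Fin n) | t ≤ ‖x‖ ^ s}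
              ≤ ∫⁻ _t in Set.Ioc (0 : ℝ) 1,
                  volume (Metric.ball (0 : EuclideanSpace ℝ (Fin n)) 1) := by
                refine setLIntegral_mono' measurableSet_Ioc fun t ht => ?_
                calc ν {x : EuclideanSpace ℝ (Fin n) | t ≤ ‖x‖ ^ s}
                    ≤ ν Set.univ := measure_mono (Set.subset_univ _)
                  _ = volume (Metric.ball (0 : EuclideanSpace ℝ (Fin n)) 1) := by
                      simp [ν]
            _ < ⊤ := by
                rw [setLIntegral_const]
                exact ENNReal.mul_lt_top measure_ball_lt_top (by simp)
        · calc ∫⁻ t in Set.Ioi (1 : ℝ), ν {x : EuclideanSpace ℝ (Fin n) | t ≤ ‖x‖ ^ s}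
              ≤ ∫⁻ t in Set.Ioi (1 : ℝ), ENNReal.ofReal (t ^ ((n : ℝ) / s))
                  * volume (Metric.ball (0 : EuclideanSpace ℝ (Fin n)) 1) := by
                refine setLIntegral_mono' measurableSet_Ioi fun t ht => ?_
                have ht0 : (0 : ℝ) < t := lt_trans one_pos ht
                refine (key t ht0).trans ?_
                rw [Measure.addHaar_closedBall _ _ (Real.rpow_nonneg ht0.le _),
                  finrank_euclideanSpace_fin]
                have : (t ^ (1 / s)) ^ n = t ^ ((n : ℝ) / s) := by
                  rw [← Real.rpow_natCast (t ^ (1 / s)) n, ← Real.rpow_mul ht0.le]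
                  ring_nf
                rw [this]
            _ = (∫⁻ t in Set.Ioi (1 : ℝ), ENNReal.ofReal (t ^ ((n : ℝ) / s)))
                  * volume (Metric.ball (0 : EuclideanSpace ℝ (Fin n)) 1) :=
                lintegral_mul_const' _ _ measure_ball_lt_top.ne
            _ < ⊤ := ENNReal.mul_lt_top
                (IntegrableOn.setLIntegral_lt_top
                  (integrableOn_Ioi_rpow_of_lt hns one_pos))
                measure_ball_lt_top

lemma aux_finite_lintegral_weight (n : ℕ) {a c : ℝ} (ha : -(n : ℝ) < a)
    (hc : a + c < -(n : ℝ)) :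
    ∫⁻ x : EuclideanSpace ℝ (Fin n),
      ENNReal.ofReal (‖x‖ ^ a * max 1 ‖x‖ ^ c) < ⊤ := by
  have hc0 : c < 0 := by
    have : (0 : ℝ) ≤ (n : ℝ) := Nat.cast_nonneg n
    linarith
  rw [← lintegral_add_compl _
    (measurableSet_ball (x := (0 : EuclideanSpace ℝ (Fin n))) (ε := 1))]
  refine ENNReal.add_lt_top.2 ⟨?_, ?_⟩
  · have heq : ∀ x ∈ Metric.ball (0 : EuclideanSpace ℝ (Fin n)) 1,
        ENNReal.ofReal (‖x‖ ^ a * max 1 ‖x‖ ^ c) = ENNReal.ofReal (‖x‖ ^ a) := by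
      intro x hx
      rw [max_eq_left (le_of_lt (mem_ball_zero_iff.mp hx)), Real.one_rpow, mul_one]
    rw [setLIntegral_congr_fun measurableSet_ball heq]
    exact aux_finite_lintegral_ball_rpow n ha
  · have hbound : ∀ x ∈ (Metric.ball (0 : EuclideanSpace ℝ (Fin n)) 1)ᶜ,
        ENNReal.ofReal (‖x‖ ^ a * max 1 ‖x‖ ^ c)
          ≤ ENNReal.ofReal ((2 : ℝ) ^ (-(a + c)) * (1 + ‖x‖) ^ (-(-(a + c)))) := by
      intro x hx
      have hx1 : (1 : ℝ) ≤ ‖x‖ := by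
        simpa [Metric.mem_ball, dist_zero_right] using hx
      have hx0 : (0 : ℝ) < ‖x‖ := lt_of_lt_of_le one_pos hx1
      refine ENNReal.ofReal_le_ofReal ?_
      rw [max_eq_right hx1, ← Real.rpow_add hx0, neg_neg]
      have h2x : (1 : ℝ) + ‖x‖ ≤ 2 * ‖x‖ := by linarith
      have hac : a + c ≤ 0 := by
        have : (0 : ℝ) ≤ (n : ℝ) := Nat.cast_nonneg n
        linarith
      have h1 : (2 * ‖x‖) ^ (a + c) ≤ (1 + ‖x‖) ^ (a + c) :=
        Real.rpow_le_rpow_of_nonpos (by positivity) h2x hac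
      have h2 : (2 * ‖x‖) ^ (a + c) = 2 ^ (a + c) * ‖x‖ ^ (a + c) :=
        Real.mul_rpow (by norm_num) (norm_nonneg _)
      have h3 : (2 : ℝ) ^ (-(a + c)) * (2 * ‖x‖) ^ (a + c) = ‖x‖ ^ (a + c) := by
        rw [h2, ← mul_assoc, ← Real.rpow_add two_pos, neg_add_cancel, Real.rpow_zero, one_mul]
      rw [← h3]
      have h4 : (0 : ℝ) ≤ 2 ^ (-(a + c)) := le_of_lt (Real.rpow_pos_of_pos two_pos _)
      exact mul_le_mul_of_nonneg_left h1 h4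
    calc ∫⁻ x : EuclideanSpace ℝ (Fin n) in (Metric.ball 0 1)ᶜ,
          ENNReal.ofReal (‖x‖ ^ a * max 1 ‖x‖ ^ c)
        ≤ ∫⁻ x : EuclideanSpace ℝ (Fin n) in (Metric.ball 0 1)ᶜ,
            ENNReal.ofReal ((2 : ℝ) ^ (-(a + c)) * (1 + ‖x‖) ^ (-(-(a + c)))) :=
          setLIntegral_mono' measurableSet_ball.compl hbound
      _ ≤ ∫⁻ x : EuclideanSpace ℝ (Fin n),
            ENNReal.ofReal ((2 : ℝ) ^ (-(a + c)) * (1 + ‖x‖) ^ (-(-(a + c)))) :=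
          setLIntegral_le_lintegral _ _
      _ = ENNReal.ofReal ((2 : ℝ) ^ (-(a + c)))
            * ∫⁻ x : EuclideanSpace ℝ (Fin n),
                ENNReal.ofReal ((1 + ‖x‖) ^ (-(-(a + c)))) := by
          simp_rw [ENNReal.ofReal_mul (le_of_lt (Real.rpow_pos_of_pos two_pos _))]
          rw [lintegral_const_mul' _ _ ENNReal.ofReal_ne_top]
      _ < ⊤ := by
          refine ENNReal.mul_lt_top ENNReal.ofReal_lt_top ?_
          refine finite_integral_one_add_norm ?_
          rw [finrank_euclideanSpace_fin]
          linarith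

/-- Integrability criterion for anisotropic power weights at infinity. -/
theorem grushin_weight_integrable_at_infinity
    (d k : ℕ) (hd : 1 ≤ d) (hk : 1 ≤ k) (μ : ℝ) (hμ : 0 < μ)
    (Q : ℝ) (hQ : Q = d + (1 + μ) * k)
    (a b : ℝ) (ha : 0 < a + d) (hab : a + b + Q < 0) :
    ∫⁻ z in {z : EuclideanSpace ℝ (Fin d) × EuclideanSpace ℝ (Fin k) | 1 ≤ grho μ z},
        ENNReal.ofReal (‖z.1‖ ^ a * grho μ z ^ b) < ⊤ := by
  have h1μ : (0 : ℝ) < 1 + μ := by linarith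
  have h2μ : (0 : ℝ) < 2 + 2 * μ := by linarith
  have hk0 : (1 : ℝ) ≤ (k : ℝ) := by exact_mod_cast hk
  have hd0 : (1 : ℝ) ≤ (d : ℝ) := by exact_mod_cast hd
  set ε : ℝ := -(a + b + Q) / 2 with hε
  have hεpos : 0 < ε := by rw [hε]; linarith
  set b₁ : ℝ := -(d : ℝ) - a - ε with hb₁
  set b₂ : ℝ := b - b₁ with hb₂
  have hsum : b = b₁ + b₂ := by rw [hb₂]; ring
  have hb₁neg : b₁ ≤ 0 := by rw [hb₁]; linarith
  have hb₂eq : b₂ = -((1 + μ) * k) - ε := by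
    rw [hb₂, hb₁, hε, hQ]; ring
  have hk' : (k : ℝ) < -(b₂ / (1 + μ)) := by
    have hdiv : 0 < ε / (1 + μ) := div_pos hεpos h1μ
    have : -(b₂ / (1 + μ)) = (k : ℝ) + ε / (1 + μ) := by
      rw [hb₂eq]; field_simp; ring
    rw [this]; linarith
  have hb₂divneg : b₂ / (1 + μ) ≤ 0 := by linarith
  set G : EuclideanSpace ℝ (Fin d) → ℝ≥0∞ :=
    fun x => ENNReal.ofReal (‖x‖ ^ a * max 1 ‖x‖ ^ b₁) with hG
  set H : EuclideanSpace ℝ (Fin k) → ℝ≥0∞ :=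
    fun y => ENNReal.ofReal ((0 : ℝ) + ‖y‖ ^ (0 : ℝ) * max 1 ‖y‖ ^ (b₂ / (1 + μ))) with hH
  have hGmeas : Measurable G :=
    ((measurable_norm.pow measurable_const).mul
      ((measurable_const.max measurable_norm).pow measurable_const)).ennreal_ofReal
  have hHmeas : Measurable H :=
    (measurable_const.add ((measurable_norm.pow measurable_const).mul
      ((measurable_const.max measurable_norm).pow measurable_const))).ennreal_ofReal
  have hrho_meas : Measurable (fun z : EuclideanSpace ℝ (Fin d) × EuclideanSpace ℝ (Fin k) =>
      grho μ z) := by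
    unfold grho
    exact (((measurable_fst.norm.pow measurable_const).add
      (((measurable_snd.norm.pow_const 2)).const_mul _)).pow measurable_const)
  have hSmeas : MeasurableSet
      {z : EuclideanSpace ℝ (Fin d) × EuclideanSpace ℝ (Fin k) | 1 ≤ grho μ z} :=
    measurableSet_le measurable_const hrho_meas
  have hpt : ∀ z ∈ {z : EuclideanSpace ℝ (Fin d) × EuclideanSpace ℝ (Fin k) | 1 ≤ grho μ z},
      ENNReal.ofReal (‖z.1‖ ^ a * grho μ z ^ b) ≤ G z.1 * H z.2 := by
    intro z hz
    have hρ : 1 ≤ grho μ z := hz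
    set ρ : ℝ := grho μ z with hρdef
    have hρ0 : 0 < ρ := lt_of_lt_of_le one_pos hρ
    have hA0 : (0 : ℝ) ≤ ‖z.1‖ ^ (2 + 2 * μ) + (1 + μ) ^ 2 * ‖z.2‖ ^ 2 := by positivity
    have hρA : ρ ^ (2 + 2 * μ) = ‖z.1‖ ^ (2 + 2 * μ) + (1 + μ) ^ 2 * ‖z.2‖ ^ 2 := by
      rw [hρdef]
      show ((‖z.1‖ ^ (2 + 2 * μ) + (1 + μ) ^ 2 * ‖z.2‖ ^ 2) ^ (1 / (2 + 2 * μ)))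
          ^ (2 + 2 * μ) = _
      rw [← Real.rpow_mul hA0, one_div_mul_cancel h2μ.ne', Real.rpow_one]
    have hx : ‖z.1‖ ≤ ρ := by
      have h1 : ‖z.1‖ ^ (2 + 2 * μ) ≤ ρ ^ (2 + 2 * μ) := by
        rw [hρA]; exact le_add_of_nonneg_right (by positivity)
      have h2 : (‖z.1‖ ^ (2 + 2 * μ)) ^ (1 / (2 + 2 * μ)) = ‖z.1‖ := by
        rw [← Real.rpow_mul (norm_nonneg _), mul_one_div, div_self h2μ.ne', Real.rpow_one]
      have h3 : (ρ ^ (2 + 2 * μ)) ^ (1 / (2 + 2 * μ)) = ρ := by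
        rw [← Real.rpow_mul hρ0.le, mul_one_div, div_self h2μ.ne', Real.rpow_one]
      calc ‖z.1‖ = (‖z.1‖ ^ (2 + 2 * μ)) ^ (1 / (2 + 2 * μ)) := h2.symm
        _ ≤ (ρ ^ (2 + 2 * μ)) ^ (1 / (2 + 2 * μ)) :=
            Real.rpow_le_rpow (Real.rpow_nonneg (norm_nonneg _) _) h1 (by positivity)
        _ = ρ := h3
    have hy : ‖z.2‖ ≤ ρ ^ (1 + μ) := by
      have hsq : (ρ ^ (1 + μ)) ^ 2 = ρ ^ (2 + 2 * μ) := by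
        rw [← Real.rpow_natCast (ρ ^ (1 + μ)) 2, ← Real.rpow_mul hρ0.le]
        norm_num; ring_nf
      have h1 : ‖z.2‖ ^ 2 ≤ (ρ ^ (1 + μ)) ^ 2 := by
        rw [hsq, hρA]
        nlinarith [norm_nonneg z.1, norm_nonneg z.2, Real.rpow_nonneg (norm_nonneg z.1) (2 + 2 * μ), sq_nonneg (‖z.2‖ * μ)]
      exact le_of_pow_le_pow_left₀ two_ne_zero (Real.rpow_nonneg hρ0.le _) h1
    have hρ1μ : (1 : ℝ) ≤ ρ ^ (1 + μ) := by
      have h5 := Real.rpow_le_rpow zero_le_one hρ h1μ.le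
      rwa [Real.one_rpow] at h5
    have hxmax : max 1 ‖z.1‖ ≤ ρ := max_le hρ hx
    have hymax : max 1 ‖z.2‖ ≤ ρ ^ (1 + μ) := max_le hρ1μ hy
    have hmax1pos : (0 : ℝ) < max 1 ‖z.1‖ := lt_of_lt_of_le one_pos (le_max_left _ _)
    have hmax2pos : (0 : ℝ) < max 1 ‖z.2‖ := lt_of_lt_of_le one_pos (le_max_left _ _)
    have e1 : ρ ^ b₁ ≤ max 1 ‖z.1‖ ^ b₁ :=
      Real.rpow_le_rpow_of_nonpos hmax1pos hxmax hb₁neg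
    have e2 : ρ ^ b₂ ≤ max 1 ‖z.2‖ ^ (b₂ / (1 + μ)) := by
      have h4 : ρ ^ b₂ = (ρ ^ (1 + μ)) ^ (b₂ / (1 + μ)) := by
        rw [← Real.rpow_mul hρ0.le]
        congr 1
        field_simp
      rw [h4]
      exact Real.rpow_le_rpow_of_nonpos hmax2pos hymax hb₂divneg
    have hreal : ‖z.1‖ ^ a * ρ ^ b
        ≤ (‖z.1‖ ^ a * max 1 ‖z.1‖ ^ b₁)
          * ((0 : ℝ) + ‖z.2‖ ^ (0 : ℝ) * max 1 ‖z.2‖ ^ (b₂ / (1 + μ))) := by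
      rw [Real.rpow_zero, zero_add, one_mul]
      calc ‖z.1‖ ^ a * ρ ^ b = (‖z.1‖ ^ a * ρ ^ b₁) * ρ ^ b₂ := by
            rw [hsum, Real.rpow_add hρ0]; ring
        _ ≤ (‖z.1‖ ^ a * max 1 ‖z.1‖ ^ b₁) * (max 1 ‖z.2‖ ^ (b₂ / (1 + μ))) := by
            refine mul_le_mul ?_ e2 (Real.rpow_nonneg hρ0.le _) (by positivity)
            exact mul_le_mul_of_nonneg_left e1 (Real.rpow_nonneg (norm_nonneg _) _)
    calc ENNReal.ofReal (‖z.1‖ ^ a * ρ ^ b)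
        ≤ ENNReal.ofReal ((‖z.1‖ ^ a * max 1 ‖z.1‖ ^ b₁)
            * ((0 : ℝ) + ‖z.2‖ ^ (0 : ℝ) * max 1 ‖z.2‖ ^ (b₂ / (1 + μ)))) :=
          ENNReal.ofReal_le_ofReal hreal
      _ = G z.1 * H z.2 := by
          rw [hG, hH]
          exact ENNReal.ofReal_mul (by positivity)
  calc ∫⁻ z in {z : EuclideanSpace ℝ (Fin d) × EuclideanSpace ℝ (Fin k) | 1 ≤ grho μ z},
        ENNReal.ofReal (‖z.1‖ ^ a * grho μ z ^ b)
      ≤ ∫⁻ z in {z : EuclideanSpace ℝ (Fin d) × EuclideanSpace ℝ (Fin k) | 1 ≤ grho μ z},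
          G z.1 * H z.2 := setLIntegral_mono' hSmeas hpt
    _ ≤ ∫⁻ z : EuclideanSpace ℝ (Fin d) × EuclideanSpace ℝ (Fin k), G z.1 * H z.2 :=
        setLIntegral_le_lintegral _ _
    _ = (∫⁻ x, G x) * ∫⁻ y, H y := by
        rw [MeasureTheory.Measure.volume_eq_prod]
        exact lintegral_prod_mul hGmeas.aemeasurable hHmeas.aemeasurable
    _ < ⊤ := by
        refine ENNReal.mul_lt_top ?_ ?_
        · exact aux_finite_lintegral_weight d (by linarith) (by rw [hb₁]; push_cast; linarith)
        · have hH' := aux_finite_lintegral_weight k (a := 0) (c := b₂ / (1 + μ))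
            (by linarith) (by linarith)
          simp only [hH]
          simpa using hH'
end
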